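/- arXiv:1005.4400 — 6 statements merged into one kernel-verified Lean document; each statement's English description precedes it below -/
import Mathlib

section
/- Let Ω ⊆ ℝⁿ be open and let X₁,…,X_r be smooth vector fields on Ω with assigned positive integer formal degrees d₁,…,d_r. Let F be the family of pairs (vector field, degree) generated inductively by: each (X_i, d_i) belongs to F, and if (Y,d) and (Z,e) belong to F then ([Y,Z], d+e) belongs to F. Suppose there are finitely many pairs (Y₁,e₁),…,(Y_s,e_s) ∈ F such that for every (Y,e) ∈ F there exist smooth functions c₁,…,c_s : Ω → ℝ with Y = c₁Y₁ + ⋯ + c_sY_s on Ω. Then there exists a finite list (Z₁,δ₁),…,(Z_q,δ_q) of pairs from F, containing each (X_i,d_i), such that for all 1 ≤ j,k ≤ q there exist smooth functions c_{j,k}^l : Ω → ℝ with [Z_j, Z_k] = ∑_{l : δ_l ≤ δ_j + δ_k} c_{j,k}^l Z_l on Ω. -/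
/-- A vector field on ℝⁿ: a map ℝⁿ → ℝⁿ. -/
abbrev VF (n : ℕ) := EuclideanSpace ℝ (Fin n) → EuclideanSpace ℝ (Fin n)

/-- The Lie bracket `[V,U](y) = DU(y)·V(y) − DV(y)·U(y)` of vector fields on ℝⁿ. -/
noncomputable def lieBracket {n : ℕ} (V U : VF n) : VF n :=
  fun y => fderiv ℝ U y (V y) - fderiv ℝ V y (U y)

/-- The family `F` of pairs (vector field, degree) generated from `(X i, d i)` by
iterated Lie brackets, degrees adding. -/
inductive GenFam {n r : ℕ} (X : Fin r → VF n) (d : Fin r → ℕ) : VF n → ℕ → Prop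
  | base (i : Fin r) : GenFam X d (X i) (d i)
  | bracket {Y Z : VF n} {dY dZ : ℕ} :
      GenFam X d Y dY → GenFam X d Z dZ → GenFam X d (lieBracket Y Z) (dY + dZ)

namespace Stmt0Aux

/-- One step of closing a list of (vector field, degree) pairs under brackets. -/
noncomputable def step {n : ℕ} (L : List (VF n × ℕ)) : List (VF n × ℕ) :=
  L ++ L.flatMap (fun p => L.map fun q => (lieBracket p.1 q.1, p.2 + q.2))

lemma subset_step {n : ℕ} (L : List (VF n × ℕ)) : L ⊆ step L :=
  List.subset_append_left _ _

lemma bracket_mem_step {n : ℕ} {L : List (VF n × ℕ)} {p q : VF n × ℕ}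
    (hp : p ∈ L) (hq : q ∈ L) :
    (lieBracket p.1 q.1, p.2 + q.2) ∈ step L := by
  refine List.mem_append_right _ ?_
  simp only [List.mem_flatMap, List.mem_map]
  exact ⟨p, hp, q, hq, rfl⟩

lemma mem_step {n : ℕ} {L : List (VF n × ℕ)} {p : VF n × ℕ} (hp : p ∈ step L) :
    p ∈ L ∨ ∃ a ∈ L, ∃ b ∈ L, p = (lieBracket a.1 b.1, a.2 + b.2) := by
  rcases List.mem_append.mp hp with h | h
  · exact Or.inl h
  · simp only [List.mem_flatMap, List.mem_map] at h
    obtain ⟨a, ha, b, hb, rfl⟩ := h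
    exact Or.inr ⟨a, ha, b, hb, rfl⟩

end Stmt0Aux

/-- if the family generated by `(X i, d i)` is finitely generated as a
`C^∞(Ω)`-module, then there is a finite list `(Z j, δ j)` of pairs from the family,
containing each `(X i, d i)`, with
`[Z j, Z k] = ∑_{l : δ l ≤ δ j + δ k} c_{j,k}^l Z l` on `Ω` for smooth `c_{j,k}^l`. -/
theorem stmt_0 (n r : ℕ) (Ω : Set (EuclideanSpace ℝ (Fin n))) (hΩ : IsOpen Ω)
    (X : Fin r → VF n) (d : Fin r → ℕ) (hd : ∀ i, 0 < d i)
    (hX : ∀ i, ContDiffOn ℝ (⊤ : ℕ∞) (X i) Ω)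
    (s : ℕ) (Y : Fin s → VF n) (e : Fin s → ℕ)
    (hYF : ∀ i, GenFam X d (Y i) (e i))
    (hgen : ∀ (Z : VF n) (dZ : ℕ), GenFam X d Z dZ →
      ∃ c : Fin s → EuclideanSpace ℝ (Fin n) → ℝ,
        (∀ i, ContDiffOn ℝ (⊤ : ℕ∞) (c i) Ω) ∧
        ∀ x ∈ Ω, Z x = ∑ i, c i x • Y i x) :
    ∃ (q : ℕ) (Z : Fin q → VF n) (δ : Fin q → ℕ),
      (∀ j, GenFam X d (Z j) (δ j)) ∧
      (∀ i, ∃ j, Z j = X i ∧ δ j = d i) ∧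
      ∀ j k : Fin q,
        ∃ c : Fin q → EuclideanSpace ℝ (Fin n) → ℝ,
          (∀ l, ContDiffOn ℝ (⊤ : ℕ∞) (c l) Ω) ∧
          ∀ x ∈ Ω, lieBracket (Z j) (Z k) x =
            ∑ l ∈ Finset.univ.filter (fun l => δ l ≤ δ j + δ k), c l x • Z l x := by
  classical
  set L0 : List (VF n × ℕ) := (List.finRange r).map (fun i => (X i, d i)) with hL0
  set it : ℕ → List (VF n × ℕ) := fun k => Stmt0Aux.step^[k] L0 with hit
  have hit_succ : ∀ k, it (k + 1) = Stmt0Aux.step (it k) := fun k =>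
    Function.iterate_succ_apply' _ _ _
  have hmono : ∀ {a b : ℕ}, a ≤ b → it a ⊆ it b := by
    intro a b hab
    induction hab with
    | refl => exact fun x h => h
    | step _ ih =>
        intro x hx
        rw [hit_succ]
        exact Stmt0Aux.subset_step _ (ih hx)
  have hdeg : ∀ {W : VF n} {dW : ℕ}, GenFam X d W dW → 0 < dW := by
    intro W dW h
    induction h with
    | base i => exact hd i
    | bracket h1 h2 ih1 ih2 => omega
  have hitGen : ∀ k, ∀ p ∈ it k, GenFam X d p.1 p.2 := by
    intro k
    induction k with
    | zero =>
        intro p hp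
        simp only [hit, Function.iterate_zero_apply, hL0, List.mem_map] at hp
        obtain ⟨i, _, rfl⟩ := hp
        exact GenFam.base i
    | succ k ih =>
        intro p hp
        rw [hit_succ] at hp
        rcases Stmt0Aux.mem_step hp with h | ⟨a, ha, b, hb, rfl⟩
        · exact ih p h
        · exact GenFam.bracket (ih a ha) (ih b hb)
  have hmemF : ∀ {W : VF n} {dW : ℕ}, GenFam X d W dW → (W, dW) ∈ it dW := by
    intro W dW h
    induction h with
    | base i =>
        refine hmono (Nat.zero_le _) ?_
        simp only [hit, Function.iterate_zero_apply, hL0, List.mem_map]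
        exact ⟨i, List.mem_finRange i, rfl⟩
    | @bracket A B dA dB hA hB ihA ihB =>
        have h1 : 0 < dA := hdeg hA
        have h2 : 0 < dB := hdeg hB
        have hA' : (A, dA) ∈ it (dA + dB - 1) := hmono (by omega) ihA
        have hB' : (B, dB) ∈ it (dA + dB - 1) := hmono (by omega) ihB
        have := Stmt0Aux.bracket_mem_step hA' hB'
        rw [← hit_succ] at this
        have heq : dA + dB - 1 + 1 = dA + dB := by omega
        rwa [heq] at this
  set M : ℕ := Finset.univ.sup e with hM
  set L : List (VF n × ℕ) := it M with hL
  refine ⟨L.length, fun j => (L.get j).1, fun j => (L.get j).2, ?_, ?_, ?_⟩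
  · intro j
    exact hitGen M _ (List.get_mem L j)
  · intro i
    have hmem : (X i, d i) ∈ L := by
      refine hmono (Nat.zero_le M) ?_
      simp only [hit, Function.iterate_zero_apply, hL0, List.mem_map]
      exact ⟨i, List.mem_finRange i, rfl⟩
    obtain ⟨j, hj⟩ := List.mem_iff_get.mp hmem
    exact ⟨j, congrArg Prod.fst hj, congrArg Prod.snd hj⟩
  · intro j k
    have hb : GenFam X d (lieBracket (L.get j).1 (L.get k).1) ((L.get j).2 + (L.get k).2) :=
      GenFam.bracket (hitGen M _ (List.get_mem L j)) (hitGen M _ (List.get_mem L k))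
    by_cases hcase : (L.get j).2 + (L.get k).2 ≤ M
    · -- the bracket itself is in the list
      have hmem : (lieBracket (L.get j).1 (L.get k).1, (L.get j).2 + (L.get k).2) ∈ L :=
        hmono hcase (hmemF hb)
      obtain ⟨l₀, hl₀⟩ := List.mem_iff_get.mp hmem
      refine ⟨fun l _ => if l = l₀ then (1 : ℝ) else 0, ?_, ?_⟩
      · intro l
        by_cases h : l = l₀ <;> simp [h, contDiffOn_const]
      · intro x hx
        have hl₀mem : l₀ ∈ Finset.univ.filter
            (fun l => (L.get l).2 ≤ (L.get j).2 + (L.get k).2) :=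
          Finset.mem_filter.mpr ⟨Finset.mem_univ _, le_of_eq (congrArg Prod.snd hl₀)⟩
        rw [Finset.sum_eq_single_of_mem l₀ hl₀mem]
        · have h1 := congrArg Prod.fst hl₀
          simp only [List.get_eq_getElem] at h1
          simp [h1]
        · intro b _ hbne
          simp [hbne]
    · -- use the generators
      obtain ⟨c', hc's, hc'⟩ := hgen _ _ hb
      have hYmem : ∀ i : Fin s, ∃ l : Fin L.length, L.get l = (Y i, e i) := fun i =>
        List.mem_iff_get.mp (hmono (Finset.le_sup (Finset.mem_univ i)) (hmemF (hYF i)))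
      choose φ hφ using hYmem
      refine ⟨fun l x => ∑ i, if φ i = l then c' i x else 0, ?_, ?_⟩
      · intro l
        refine ContDiffOn.sum fun i _ => ?_
        by_cases h : φ i = l <;> simp [h, contDiffOn_const, hc's i]
      · intro x hx
        rw [hc' x hx]
        have key : ∀ i : Fin s,
            (∑ l ∈ Finset.univ.filter
              (fun l => (L.get l).2 ≤ (L.get j).2 + (L.get k).2),
              if φ i = l then c' i x • (L.get l).1 x else 0) = c' i x • Y i x := by
          intro i
          have hmemφ : φ i ∈ Finset.univ.filter
              (fun l => (L.get l).2 ≤ (L.get j).2 + (L.get k).2) := by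
            have : (L.get (φ i)).2 = e i := congrArg Prod.snd (hφ i)
            have hei : e i ≤ M := Finset.le_sup (Finset.mem_univ i)
            simp only [Finset.mem_filter, Finset.mem_univ, true_and, this]
            omega
          rw [Finset.sum_eq_single_of_mem (φ i) hmemφ]
          · have h1 := congrArg Prod.fst (hφ i)
            simp only [List.get_eq_getElem] at h1
            simp [h1]
          · intro b _ hbne
            simp [Ne.symm hbne]
        calc (∑ i, c' i x • Y i x)
            = ∑ i, ∑ l ∈ Finset.univ.filter
                (fun l => (L.get l).2 ≤ (L.get j).2 + (L.get k).2),
                if φ i = l then c' i x • (L.get l).1 x else 0 := by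
              simp_rw [key]
          _ = ∑ l ∈ Finset.univ.filter
                (fun l => (L.get l).2 ≤ (L.get j).2 + (L.get k).2),
                ∑ i, if φ i = l then c' i x • (L.get l).1 x else 0 :=
              Finset.sum_comm
          _ = ∑ l ∈ Finset.univ.filter
                (fun l => (L.get l).2 ≤ (L.get j).2 + (L.get k).2),
                (∑ i, if φ i = l then c' i x else 0) • (L.get l).1 x := by
              refine Finset.sum_congr rfl fun l _ => ?_
              rw [Finset.sum_smul]
              refine Finset.sum_congr rfl fun i _ => ?_
              by_cases h : φ i = l <;> simp [h]
end

section
/- Let W : ℝ^N × ℝⁿ → ℝⁿ and suppose there is L ≥ 0 such that |W(s,y) − W(s,y')| ≤ L·|s|·|y − y'| for all s ∈ ℝ^N and y, y' ∈ ℝⁿ. Fix t ∈ ℝ^N and suppose ω₁, ω₂ : [0,1] → ℝⁿ are continuous, satisfy ω₁(0) = ω₂(0), and for every ε ∈ (0,1] each ωᵢ is differentiable at ε with ωᵢ'(ε) = (1/ε)·W(εt, ωᵢ(ε)). Then ω₁(ε) = ω₂(ε) for all ε ∈ [0,1]. -/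
/-!
For `ε > 0` the field `y ↦ ε⁻¹ • W (ε • t) y` is Lipschitz with constant `L‖t‖`: the factor `ε`
in the bound `L ‖ε t‖` cancels the singular `ε⁻¹`. Grönwall's inequality on `[a, ε]` then bounds
`|ω₁ ε - ω₂ ε|` by `|ω₁ a - ω₂ a| e^{L‖t‖ ε}`, and letting `a → 0⁺` this tends to `0` by
continuity at `0` and `ω₁ 0 = ω₂ 0`.
-/

open Set Filter Topology NNReal Real

variable {E F : Type*} [NormedAddCommGroup E] [NormedSpace ℝ E]
  [NormedAddCommGroup F] [NormedSpace ℝ F]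

lemma lipschitzWith_inv_smul_apply_smul {W : E → F → F} {L : ℝ≥0}
    (hLip : ∀ s y y', ‖W s y - W s y'‖ ≤ L * ‖s‖ * ‖y - y'‖) (t : E) {ε : ℝ} (hε : 0 < ε) :
    LipschitzWith (L * ‖t‖₊) (fun y ↦ ε⁻¹ • W (ε • t) y) := by
  refine LipschitzWith.of_dist_le_mul fun y y' ↦ ?_
  rw [dist_eq_norm, dist_eq_norm, ← smul_sub, norm_smul, norm_inv, norm_of_nonneg hε.le]
  calc ε⁻¹ * ‖W (ε • t) y - W (ε • t) y'‖ ≤ ε⁻¹ * (L * ‖ε • t‖ * ‖y - y'‖) := by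
        gcongr; exact hLip _ _ _
    _ = L * ‖t‖ * ‖y - y'‖ := by
        rw [norm_smul, norm_of_nonneg hε.le]; field_simp
    _ = ↑(L * ‖t‖₊) * ‖y - y'‖ := by push_cast; rfl

lemma dist_le_dist_mul_exp_of_hasDerivWithinAt_inv_smul {W : E → F → F} {L : ℝ≥0}
    (hLip : ∀ s y y', ‖W s y - W s y'‖ ≤ L * ‖s‖ * ‖y - y'‖) (t : E) {ω₁ ω₂ : ℝ → F} {b : ℝ}
    (hc₁ : ContinuousOn ω₁ (Icc 0 b)) (hc₂ : ContinuousOn ω₂ (Icc 0 b))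
    (hd₁ : ∀ ε ∈ Ioc 0 b, HasDerivWithinAt ω₁ (ε⁻¹ • W (ε • t) (ω₁ ε)) (Icc 0 b) ε)
    (hd₂ : ∀ ε ∈ Ioc 0 b, HasDerivWithinAt ω₂ (ε⁻¹ • W (ε • t) (ω₂ ε)) (Icc 0 b) ε)
    {a ε : ℝ} (ha : 0 < a) (haε : a ≤ ε) (hεb : ε ≤ b) :
    dist (ω₁ ε) (ω₂ ε) ≤ dist (ω₁ a) (ω₂ a) * exp (L * ‖t‖ * (ε - a)) := by
  have hsub : Icc a ε ⊆ Icc 0 b := Icc_subset_Icc ha.le hεb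
  have hderiv : ∀ ω : ℝ → F,
      (∀ x ∈ Ioc 0 b, HasDerivWithinAt ω (x⁻¹ • W (x • t) (ω x)) (Icc 0 b) x) →
      ∀ x ∈ Ico a ε, HasDerivWithinAt ω (x⁻¹ • W (x • t) (ω x)) (Ici x) x := by
    intro ω hω x hx
    have hx0 : 0 < x := ha.trans_le hx.1
    refine (hω x ⟨hx0, hx.2.le.trans hεb⟩).mono_of_mem_nhdsWithin ?_
    exact mem_of_superset (Icc_mem_nhdsGE (hx.2.trans_le hεb)) (Icc_subset_Icc hx0.le le_rfl)
  have := dist_le_of_trajectories_ODE_of_mem (v := fun x y ↦ x⁻¹ • W (x • t) y) (s := fun _ ↦ univ)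
    (fun x hx ↦ (lipschitzWith_inv_smul_apply_smul hLip t (ha.trans_le hx.1)).lipschitzOnWith)
    (hc₁.mono hsub) (hderiv ω₁ hd₁) (fun _ _ ↦ trivial) (hc₂.mono hsub) (hderiv ω₂ hd₂)
    (fun _ _ ↦ trivial) le_rfl ε ⟨haε, le_rfl⟩
  simpa using this

/-- uniqueness for the singular ODE `ω'(ε) = (1/ε) W(εt, ω(ε))` on `[0,1]`
under the Lipschitz bound `|W(s,y) − W(s,y')| ≤ L |s| |y − y'|`. -/
theorem stmt_1 (N n : ℕ)
    (W : EuclideanSpace ℝ (Fin N) → EuclideanSpace ℝ (Fin n) → EuclideanSpace ℝ (Fin n))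
    (L : ℝ) (hL : 0 ≤ L)
    (hLip : ∀ s y y', ‖W s y - W s y'‖ ≤ L * ‖s‖ * ‖y - y'‖)
    (t : EuclideanSpace ℝ (Fin N))
    (ω₁ ω₂ : ℝ → EuclideanSpace ℝ (Fin n))
    (hc₁ : ContinuousOn ω₁ (Icc 0 1)) (hc₂ : ContinuousOn ω₂ (Icc 0 1))
    (h0 : ω₁ 0 = ω₂ 0)
    (hd₁ : ∀ ε ∈ Ioc (0:ℝ) 1,
      HasDerivWithinAt ω₁ (ε⁻¹ • W (ε • t) (ω₁ ε)) (Icc 0 1) ε)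
    (hd₂ : ∀ ε ∈ Ioc (0:ℝ) 1,
      HasDerivWithinAt ω₂ (ε⁻¹ • W (ε • t) (ω₂ ε)) (Icc 0 1) ε) :
    ∀ ε ∈ Icc (0:ℝ) 1, ω₁ ε = ω₂ ε := by
  rintro ε ⟨hε0, hε1⟩
  rcases hε0.eq_or_lt with rfl | hε
  · exact h0
  have : NeBot (𝓝[Ioo 0 ε] (0 : ℝ)) := left_nhdsWithin_Ioo_neBot hε
  have hle : 𝓝[Ioo 0 ε] (0 : ℝ) ≤ 𝓝[Icc 0 1] 0 :=
    nhdsWithin_mono _ (Ioo_subset_Icc_self.trans (Icc_subset_Icc le_rfl hε1))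
  have hlim : Tendsto (fun a ↦ dist (ω₁ a) (ω₂ a) * exp (L * ‖t‖ * (ε - a)))
      (𝓝[Ioo 0 ε] 0) (𝓝 (dist (ω₁ 0) (ω₂ 0) * exp (L * ‖t‖ * (ε - 0)))) := by
    refine (((hc₁ 0 ⟨le_rfl, zero_le_one⟩).dist (hc₂ 0 ⟨le_rfl, zero_le_one⟩)).mono_left hle).mul ?_
    exact ((continuous_const.mul (continuous_const.sub continuous_id)).rexp.tendsto 0).mono_left
      nhdsWithin_le_nhds
  have hbound : ∀ᶠ a in 𝓝[Ioo 0 ε] 0,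
      dist (ω₁ ε) (ω₂ ε) ≤ dist (ω₁ a) (ω₂ a) * exp (L * ‖t‖ * (ε - a)) :=
    eventually_mem_nhdsWithin.mono fun a ha ↦
      dist_le_dist_mul_exp_of_hasDerivWithinAt_inv_smul (L := ⟨L, hL⟩) hLip t hc₁ hc₂ hd₁ hd₂
        ha.1 ha.2.le hε1
  have := ge_of_tendsto hlim hbound
  rw [h0, dist_self, zero_mul] at this
  exact dist_le_zero.1 this
end

section
/- Let W : ℝ^N × ℝⁿ → ℝⁿ be continuous and suppose there exist K, L ≥ 0 with |W(s,y)| ≤ K·|s| and |W(s,y) − W(s,y')| ≤ L·|s|·|y − y'| for all s ∈ ℝ^N, y, y' ∈ ℝⁿ. Then for every t ∈ ℝ^N and x ∈ ℝⁿ there exists a unique continuous ω_{t,x} : [0,1] → ℝⁿ with ω_{t,x}(0) = x which is differentiable on (0,1] with ω_{t,x}'(ε) = (1/ε)·W(εt, ω_{t,x}(ε)) for all ε ∈ (0,1]. Moreover, setting γ(t,x) := ω_{t,x}(1), one has γ(0,x) = x for all x, and for every t ∈ ℝ^N and x ∈ ℝⁿ the map ε ↦ γ(εt, x) is differentiable at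 ε = 1 with derivative W(t, γ(t,x)). -/
/-!
For fixed `t`, the equation reads `ω' = v ε ω` with `v ε y = ε⁻¹ • W (ε • t) y`. The hypotheses
make `v ε` bounded by `K‖t‖` and `L‖t‖`-Lipschitz uniformly in `ε ∈ (0, 1]`, but `v` may be
discontinuous at `ε = 0`, so Picard–Lindelöf does not apply verbatim. Boundedness is enough for
the Picard operator `F ↦ x + ∫₀^· v s (F s) ds` on `C([0, 1])`: its `k`-th iterate is
`(L‖t‖)ᵏ / k!`-Lipschitz, hence contracting for large `k`, which gives a solution. Uniqueness
needs no estimate at `0`: Gronwall on `[δ, 1]` bounds the distance of two solutions by a multiple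
of their distance at `δ`, which tends to `0` with `δ`.

Uniqueness also gives the scaling law `ω_{c t, x}(δ) = ω_{t, x}(c δ)` for `c ∈ (0, 1]`. Hence
`γ(ε t, x) = ω_{2 t, x}(ε / 2)` for `ε` near `1`, and the derivative at `ε = 1` is read off from
the equation at the interior point `1 / 2`.
-/

open Set Filter Topology MeasureTheory Function
open scoped NNReal

section SingularCauchyProblem

variable {E : Type*} [NormedAddCommGroup E] [NormedSpace ℝ E]
  {v : ℝ → E → E} {a b C : ℝ} {L : ℝ≥0}

lemma intervalIntegrable_comp_of_continuousOn_Ioc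
    (hv : ContinuousOn (uncurry v) (Ioc a b ×ˢ univ)) (hC : ∀ s ∈ Ioc a b, ∀ y, ‖v s y‖ ≤ C)
    {u : ℝ → E} (hu : ContinuousOn u (Ioc a b)) {r : ℝ} (hr : r ∈ Icc a b) :
    IntervalIntegrable (fun s => v s (u s)) volume a r := by
  have hcont : ContinuousOn (fun s => v s (u s)) (Ioc a r) :=
    (ODE.continuousOn_comp hv hu fun _ _ => mem_univ _).mono (Ioc_subset_Ioc_right hr.2)
  rw [intervalIntegrable_iff_integrableOn_Ioc_of_le hr.1]
  exact IntegrableOn.of_bound measure_Ioc_lt_top (hcont.aestronglyMeasurable measurableSet_Ioc) C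
    ((ae_restrict_iff' measurableSet_Ioc).2 (ae_of_all _ fun s hs =>
      hC s (Ioc_subset_Ioc_right hr.2 hs) _))

theorem eqOn_Icc_of_hasDerivWithinAt_Ioc (hL : ∀ s ∈ Ioc a b, LipschitzWith L (v s))
    {f g : ℝ → E} (hf : ContinuousOn f (Icc a b))
    (hf' : ∀ s ∈ Ioc a b, HasDerivWithinAt f (v s (f s)) (Icc a b) s)
    (hg : ContinuousOn g (Icc a b))
    (hg' : ∀ s ∈ Ioc a b, HasDerivWithinAt g (v s (g s)) (Icc a b) s) (ha : f a = g a) :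
    EqOn f g (Icc a b) := by
  intro r hr
  rcases hr.1.eq_or_lt with rfl | har
  · exact ha
  have hderiv : ∀ {h : ℝ → E}, (∀ s ∈ Ioc a b, HasDerivWithinAt h (v s (h s)) (Icc a b) s) →
      ∀ δ ∈ Ioo a r, ∀ s ∈ Ico δ r, HasDerivWithinAt h (v s (h s)) (Ici s) s :=
    fun hh' δ hδ s hs => ((hh' s ⟨hδ.1.trans_le hs.1, (hs.2.trans_le hr.2).le⟩).hasDerivAt
      (Icc_mem_nhds (hδ.1.trans_le hs.1) (hs.2.trans_le hr.2))).hasDerivWithinAt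
  have hgronwall : ∀ δ ∈ Ioo a r,
      dist (f r) (g r) ≤ dist (f δ) (g δ) * Real.exp (L * (r - δ)) := fun δ hδ =>
    dist_le_of_trajectories_ODE_of_mem (s := fun _ => univ)
      (fun s hs => (hL s ⟨hδ.1.trans_le hs.1, (hs.2.trans_le hr.2).le⟩).lipschitzOnWith)
      (hf.mono (Icc_subset_Icc hδ.1.le hr.2)) (hderiv hf' δ hδ) (fun _ _ => trivial)
      (hg.mono (Icc_subset_Icc hδ.1.le hr.2)) (hderiv hg' δ hδ) (fun _ _ => trivial) le_rfl
      r ⟨hδ.2.le, le_rfl⟩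
  have hlim : Tendsto (fun δ => dist (f δ) (g δ) * Real.exp (L * (r - δ))) (𝓝[>] a)
      (𝓝 (dist (f a) (g a) * Real.exp (L * (r - a)))) := by
    have hIcc : Icc a b ∈ 𝓝[>] a := Icc_mem_nhdsGT (har.trans_le hr.2)
    have hfa := (hf a ⟨le_rfl, (har.trans_le hr.2).le⟩).mono_of_mem_nhdsWithin hIcc
    have hga := (hg a ⟨le_rfl, (har.trans_le hr.2).le⟩).mono_of_mem_nhdsWithin hIcc
    exact (hfa.dist hga).mul
      (by fun_prop : Continuous fun δ => Real.exp (L * (r - δ))).continuousWithinAt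
  rw [ha, dist_self, zero_mul] at hlim
  refine dist_le_zero.1 (ge_of_tendsto hlim ?_)
  filter_upwards [Ioo_mem_nhdsGT har] with δ hδ using hgronwall δ hδ

lemma exists_isFixedPt_of_dist_iterate_le {X : Type*} [MetricSpace X] [CompleteSpace X]
    [Nonempty X] {T : X → X} (c : ℝ≥0)
    (hT : ∀ k x y, dist (T^[k] x) (T^[k] y) ≤ c ^ k / k.factorial * dist x y) :
    ∃ x, IsFixedPt T x := by
  obtain ⟨k, hk⟩ := (FloorSemiring.tendsto_pow_div_factorial_atTop (c : ℝ)).eventually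
    (gt_mem_nhds zero_lt_one) |>.exists
  have hcontr : ContractingWith ⟨(c : ℝ) ^ k / k.factorial, by positivity⟩ T^[k] :=
    ⟨hk, LipschitzWith.of_dist_le_mul (hT k)⟩
  exact ⟨_, hcontr.isFixedPt_fixedPoint_iterate⟩

noncomputable def singularPicard (hab : a ≤ b) (hv : ContinuousOn (uncurry v) (Ioc a b ×ˢ univ))
    (hC : ∀ s ∈ Ioc a b, ∀ y, ‖v s y‖ ≤ C) (x : E) (F : C(Icc a b, E)) : C(Icc a b, E) where
  toFun r := ODE.picard v a x (IccExtend hab F) r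
  continuous_toFun := by
    have hint := intervalIntegrable_comp_of_continuousOn_Ioc hv hC
      (F.continuous.Icc_extend' (h := hab)).continuousOn (right_mem_Icc.2 hab)
    have h := intervalIntegral.continuousOn_primitive_interval' hint left_mem_uIcc
    rw [uIcc_of_le hab] at h
    exact continuous_const.add (h.comp_continuous continuous_subtype_val Subtype.prop)

lemma dist_iterate_singularPicard_apply_le (hab : a ≤ b)
    (hv : ContinuousOn (uncurry v) (Ioc a b ×ˢ univ)) (hC : ∀ s ∈ Ioc a b, ∀ y, ‖v s y‖ ≤ C)
    (hL : ∀ s ∈ Ioc a b, LipschitzWith L (v s)) (x : E) (F G : C(Icc a b, E)) (k : ℕ)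
    (r : Icc a b) :
    dist ((singularPicard hab hv hC x)^[k] F r) ((singularPicard hab hv hC x)^[k] G r) ≤
      (L * (r - a)) ^ k / k.factorial * dist F G := by
  induction k generalizing r with
  | zero => simpa using ContinuousMap.dist_apply_le_dist r
  | succ k ih =>
    set F' := (singularPicard hab hv hC x)^[k] F
    set G' := (singularPicard hab hv hC x)^[k] G
    have hint (H : C(Icc a b, E)) :
        IntervalIntegrable (fun s => v s (IccExtend hab H s)) volume a r :=
      intervalIntegrable_comp_of_continuousOn_Ioc hv hC
        (H.continuous.Icc_extend' (h := hab)).continuousOn r.2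
    have hpt : ∀ s ∈ Ioc a (r : ℝ), ‖v s (IccExtend hab F' s) - v s (IccExtend hab G' s)‖ ≤
        L ^ (k + 1) / k.factorial * dist F G * (s - a) ^ k := by
      intro s hs
      have hsI : s ∈ Icc a b := ⟨hs.1.le, hs.2.trans r.2.2⟩
      rw [← dist_eq_norm]
      calc dist (v s (IccExtend hab F' s)) (v s (IccExtend hab G' s))
          ≤ L * dist (IccExtend hab F' s) (IccExtend hab G' s) :=
            (hL s ⟨hs.1, hsI.2⟩).dist_le_mul _ _
        _ ≤ L * ((L * (s - a)) ^ k / k.factorial * dist F G) := by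
            rw [IccExtend_of_mem _ _ hsI, IccExtend_of_mem _ _ hsI]
            exact mul_le_mul_of_nonneg_left (ih ⟨s, hsI⟩) L.2
        _ = L ^ (k + 1) / k.factorial * dist F G * (s - a) ^ k := by rw [mul_pow]; ring
    rw [iterate_succ_apply', iterate_succ_apply', dist_eq_norm]
    change ‖ODE.picard v a x (IccExtend hab F') r - ODE.picard v a x (IccExtend hab G') r‖ ≤ _
    rw [ODE.picard_apply, ODE.picard_apply, add_sub_add_left_eq_sub,
      ← intervalIntegral.integral_sub (hint F') (hint G')]
    refine (intervalIntegral.norm_integral_le_of_norm_le r.2.1 (ae_of_all _ hpt)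
      (Continuous.intervalIntegrable (by fun_prop) _ _)).trans_eq ?_
    rw [intervalIntegral.integral_const_mul, intervalIntegral.integral_comp_sub_right
      (fun s => s ^ k), integral_pow, Nat.factorial_succ, mul_pow]
    push_cast
    field_simp
    ring

variable [CompleteSpace E]

lemma hasDerivWithinAt_picard_of_continuousOn_Ioc
    (hv : ContinuousOn (uncurry v) (Ioc a b ×ˢ univ)) (hC : ∀ s ∈ Ioc a b, ∀ y, ‖v s y‖ ≤ C)
    {u : ℝ → E} (hu : ContinuousOn u (Ioc a b)) (x : E) {s : ℝ} (hs : s ∈ Ioc a b) :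
    HasDerivWithinAt (ODE.picard v a x u) (v s (u s)) (Icc a b) s := by
  have hcont := ODE.continuousOn_comp hv hu fun _ _ => mem_univ _
  have hnhds : Ioc a b ∈ 𝓝[Icc a b] s :=
    mem_nhdsWithin.2 ⟨Ioi a, isOpen_Ioi, hs.1, fun y hy => ⟨hy.1, hy.2.2⟩⟩
  have : Fact (s ∈ Icc a b) := ⟨Ioc_subset_Icc_self hs⟩
  exact (intervalIntegral.integral_hasDerivWithinAt_right
    (intervalIntegrable_comp_of_continuousOn_Ioc hv hC hu (Ioc_subset_Icc_self hs))
    ⟨Ioc a b, hnhds, hcont.aestronglyMeasurable measurableSet_Ioc⟩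
    ((hcont s hs).mono_of_mem_nhdsWithin hnhds)).const_add x

theorem exists_eq_forall_mem_Ioc_hasDerivWithinAt (hab : a ≤ b)
    (hv : ContinuousOn (uncurry v) (Ioc a b ×ˢ univ)) (hC : ∀ s ∈ Ioc a b, ∀ y, ‖v s y‖ ≤ C)
    (hL : ∀ s ∈ Ioc a b, LipschitzWith L (v s)) (x : E) :
    ∃ f : ℝ → E, ContinuousOn f (Icc a b) ∧ f a = x ∧
      ∀ s ∈ Ioc a b, HasDerivWithinAt f (v s (f s)) (Icc a b) s := by
  have : Nonempty C(Icc a b, E) := ⟨ContinuousMap.const _ x⟩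
  obtain ⟨F, hF⟩ := exists_isFixedPt_of_dist_iterate_le (T := singularPicard hab hv hC x)
    (L * (b - a).toNNReal) fun k F G => by
      refine (ContinuousMap.dist_le (by positivity)).2 fun r => ?_
      refine (dist_iterate_singularPicard_apply_le hab hv hC hL x F G k r).trans ?_
      rw [NNReal.coe_mul, Real.coe_toNNReal _ (sub_nonneg.2 hab)]
      gcongr
      · exact mul_nonneg L.2 (sub_nonneg.2 r.2.1)
      · exact r.2.2
  set f := IccExtend hab F
  have hfc : Continuous f := F.continuous.Icc_extend'
  have hfix : EqOn f (ODE.picard v a x f) (Icc a b) := fun r hr =>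
    (IccExtend_of_mem _ _ hr).trans (DFunLike.congr_fun hF ⟨r, hr⟩).symm
  refine ⟨f, hfc.continuousOn, (hfix ⟨le_rfl, hab⟩).trans ODE.picard_apply₀, fun s hs => ?_⟩
  exact (hasDerivWithinAt_picard_of_continuousOn_Ioc hv hC hfc.continuousOn x hs).congr hfix
    (hfix (Ioc_subset_Icc_self hs))

end SingularCauchyProblem

section SingularField

variable {F E : Type*} [NormedAddCommGroup F] [NormedSpace ℝ F]
  [NormedAddCommGroup E] [NormedSpace ℝ E] {W : F → E → E}

noncomputable def scaledField (W : F → E → E) (t : F) (ε : ℝ) (y : E) : E :=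
  ε⁻¹ • W (ε • t) y

lemma norm_scaledField_le {K : ℝ} (hW : ∀ s y, ‖W s y‖ ≤ K * ‖s‖) (t : F) {ε : ℝ}
    (hε : ε ≠ 0) (y : E) : ‖scaledField W t ε y‖ ≤ K * ‖t‖ := by
  have h := hW (ε • t) y
  rw [norm_smul] at h
  rw [scaledField, norm_smul, norm_inv, inv_mul_le_iff₀ (norm_pos_iff.2 hε)]
  linarith

lemma lipschitzWith_scaledField {L : ℝ} (hW : ∀ s y y', ‖W s y - W s y'‖ ≤ L * ‖s‖ * ‖y - y'‖)
    (t : F) {ε : ℝ} (hε : ε ≠ 0) : LipschitzWith (L * ‖t‖).toNNReal (scaledField W t ε) := by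
  refine LipschitzWith.of_dist_le' fun y y' => ?_
  have h := hW (ε • t) y y'
  rw [norm_smul] at h
  rw [dist_eq_norm, dist_eq_norm, scaledField, scaledField, ← smul_sub, norm_smul, norm_inv,
    inv_mul_le_iff₀ (norm_pos_iff.2 hε)]
  linarith

lemma continuousOn_scaledField (hW : Continuous (uncurry W)) (t : F) :
    ContinuousOn (uncurry (scaledField W t)) ({0}ᶜ ×ˢ univ) := by
  have : Continuous fun p : ℝ × E => W (p.1 • t) p.2 :=
    hW.comp ((continuous_fst.smul continuous_const).prodMk continuous_snd)
  exact (continuousOn_fst.inv₀ fun p hp => hp.1).smul this.continuousOn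

lemma scaledField_smul (t : F) {c : ℝ} (hc : c ≠ 0) (ε : ℝ) (y : E) :
    scaledField W (c • t) ε y = c • scaledField W t (c * ε) y := by
  rw [scaledField, scaledField, smul_smul, smul_smul, mul_inv, ← mul_assoc, mul_inv_cancel₀ hc,
    one_mul, mul_comm ε]

lemma hasDerivWithinAt_comp_mul_scaledField {f : ℝ → E} {t : F} {c : ℝ} (hc : c ∈ Ioc (0 : ℝ) 1)
    (hf : ∀ ε ∈ Ioc (0 : ℝ) 1, HasDerivWithinAt f (scaledField W t ε (f ε)) (Icc 0 1) ε)
    {ε : ℝ} (hε : ε ∈ Ioc (0 : ℝ) 1) :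
    HasDerivWithinAt (fun δ => f (c * δ)) (scaledField W (c • t) ε (f (c * ε))) (Icc 0 1) ε := by
  rw [scaledField_smul t hc.1.ne']
  exact (hf (c * ε) ⟨mul_pos hc.1 hε.1, mul_le_one₀ hc.2 hε.1.le hε.2⟩).scomp ε
    ((hasDerivAt_id ε).const_mul c |>.hasDerivWithinAt |>.congr_deriv (mul_one c))
    fun δ hδ => unitInterval.mul_mem (Ioc_subset_Icc_self hc) hδ

lemma hasDerivAt_one_of_scaling {g : F → ℝ → E}
    (hscale : ∀ t, ∀ c ∈ Ioc (0 : ℝ) 1, g (c • t) 1 = g t c)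
    (hderiv : ∀ t, ∀ ε ∈ Ioo (0 : ℝ) 1, HasDerivAt (g t) (scaledField W t ε (g t ε)) ε) (t : F) :
    HasDerivAt (fun ε : ℝ => g (ε • t) 1) (W t (g t 1)) 1 := by
  set u : F := (2 : ℝ) • t
  have hu : (2⁻¹ : ℝ) • u = t := by rw [smul_smul]; norm_num
  have hmid : g u 2⁻¹ = g t 1 := by rw [← hscale u 2⁻¹ (by norm_num), hu]
  have hd : HasDerivAt (g u) ((2 : ℝ) • W t (g t 1)) 2⁻¹ := by
    simpa [scaledField, hu, hmid] using hderiv u 2⁻¹ (by norm_num)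
  have hcomp : HasDerivAt (fun ε : ℝ => g u (ε / 2)) (W t (g t 1)) 1 := by
    have := hd.scomp_of_eq 1 ((hasDerivAt_id (1 : ℝ)).div_const 2) (by norm_num)
    simpa [smul_smul, comp_def] using this
  refine hcomp.congr_of_eventuallyEq ?_
  filter_upwards [Ioo_mem_nhds (by norm_num : (0 : ℝ) < 1) (by norm_num : (1 : ℝ) < 2)]
    with ε hε
  rw [← hscale u (ε / 2) ⟨by linarith [hε.1], by linarith [hε.2]⟩, smul_smul]
  congr 2
  ring

end SingularField

theorem stmt_3_general (N n : ℕ)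
    (W : EuclideanSpace ℝ (Fin N) → EuclideanSpace ℝ (Fin n) → EuclideanSpace ℝ (Fin n))
    (hWc : Continuous (fun p : EuclideanSpace ℝ (Fin N) × EuclideanSpace ℝ (Fin n) =>
      W p.1 p.2))
    (K L : ℝ)
    (hbound : ∀ s y, ‖W s y‖ ≤ K * ‖s‖)
    (hLip : ∀ s y y', ‖W s y - W s y'‖ ≤ L * ‖s‖ * ‖y - y'‖) :
    ∃ ω : EuclideanSpace ℝ (Fin N) → EuclideanSpace ℝ (Fin n) → ℝ →
        EuclideanSpace ℝ (Fin n),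
      (∀ t x, ContinuousOn (ω t x) (Icc 0 1) ∧ ω t x 0 = x ∧
        ∀ ε ∈ Ioc (0:ℝ) 1,
          HasDerivWithinAt (ω t x) (ε⁻¹ • W (ε • t) (ω t x ε)) (Icc 0 1) ε) ∧
      (∀ t x (ω' : ℝ → EuclideanSpace ℝ (Fin n)),
        ContinuousOn ω' (Icc 0 1) → ω' 0 = x →
        (∀ ε ∈ Ioc (0:ℝ) 1,
          HasDerivWithinAt ω' (ε⁻¹ • W (ε • t) (ω' ε)) (Icc 0 1) ε) →
        ∀ ε ∈ Icc (0:ℝ) 1, ω' ε = ω t x ε) ∧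
      (∀ x, ω 0 x 1 = x) ∧
      (∀ t x, HasDerivAt (fun ε : ℝ => ω (ε • t) x 1) (W t (ω t x 1)) 1) := by
  have hL t : ∀ ε ∈ Ioc (0 : ℝ) 1, LipschitzWith (L * ‖t‖).toNNReal (scaledField W t ε) :=
    fun ε hε => lipschitzWith_scaledField hLip t hε.1.ne'
  choose ω hωc hω0 hω' using fun t x => exists_eq_forall_mem_Ioc_hasDerivWithinAt zero_le_one
    ((continuousOn_scaledField hWc t).mono (prod_mono (fun ε hε => hε.1.ne') subset_rfl))
    (fun ε hε => norm_scaledField_le hbound t hε.1.ne') (hL t) x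
  have huniq t x (ω' : ℝ → EuclideanSpace ℝ (Fin n)) (hc : ContinuousOn ω' (Icc 0 1))
      (h0 : ω' 0 = x)
      (hd : ∀ ε ∈ Ioc (0 : ℝ) 1, HasDerivWithinAt ω' (scaledField W t ε (ω' ε)) (Icc 0 1) ε) :
      EqOn ω' (ω t x) (Icc 0 1) :=
    eqOn_Icc_of_hasDerivWithinAt_Ioc (hL t) hc hd (hωc t x) (hω' t x) (h0.trans (hω0 t x).symm)
  have hW0 y : W 0 y = 0 := norm_le_zero_iff.1 (by simpa using hbound 0 y)
  refine ⟨ω, fun t x => ⟨hωc t x, hω0 t x, hω' t x⟩, huniq, fun x => ?_, fun t x => ?_⟩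
  · refine (huniq 0 x (fun _ => x) continuousOn_const rfl (fun ε _ => ?_)
      ⟨zero_le_one, le_rfl⟩).symm
    simpa only [scaledField, smul_zero, hW0] using hasDerivWithinAt_const ε (Icc 0 1) x
  refine hasDerivAt_one_of_scaling (W := W) (g := fun t => ω t x) (fun t c hc => ?_)
    (fun t ε hε => ?_) t
  · simpa using (huniq (c • t) x (fun δ => ω t x (c * δ))
      ((hωc t x).comp (continuous_const.mul continuous_id).continuousOn
        fun δ hδ => unitInterval.mul_mem (Ioc_subset_Icc_self hc) hδ)
      (by simpa using hω0 t x)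
      (fun ε hε => hasDerivWithinAt_comp_mul_scaledField hc (hω' t x) hε)
      ⟨zero_le_one, le_rfl⟩).symm
  · exact (hω' t x ε ⟨hε.1, hε.2.le⟩).hasDerivAt (Icc_mem_nhds hε.1 hε.2)

/-- existence and uniqueness for the singular ODE
`ω'(ε) = (1/ε) W(εt, ω(ε))`, `ω(0) = x`, on `[0,1]`, and the basic properties of the
resulting map `γ(t,x) := ω_{t,x}(1)`. -/
theorem stmt_3 (N n : ℕ)
    (W : EuclideanSpace ℝ (Fin N) → EuclideanSpace ℝ (Fin n) → EuclideanSpace ℝ (Fin n))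
    (hWc : Continuous (fun p : EuclideanSpace ℝ (Fin N) × EuclideanSpace ℝ (Fin n) =>
      W p.1 p.2))
    (K L : ℝ) (hK : 0 ≤ K) (hL : 0 ≤ L)
    (hbound : ∀ s y, ‖W s y‖ ≤ K * ‖s‖)
    (hLip : ∀ s y y', ‖W s y - W s y'‖ ≤ L * ‖s‖ * ‖y - y'‖) :
    ∃ ω : EuclideanSpace ℝ (Fin N) → EuclideanSpace ℝ (Fin n) → ℝ →
        EuclideanSpace ℝ (Fin n),
      (∀ t x, ContinuousOn (ω t x) (Icc 0 1) ∧ ω t x 0 = x ∧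
        ∀ ε ∈ Ioc (0:ℝ) 1,
          HasDerivWithinAt (ω t x) (ε⁻¹ • W (ε • t) (ω t x ε)) (Icc 0 1) ε) ∧
      (∀ t x (ω' : ℝ → EuclideanSpace ℝ (Fin n)),
        ContinuousOn ω' (Icc 0 1) → ω' 0 = x →
        (∀ ε ∈ Ioc (0:ℝ) 1,
          HasDerivWithinAt ω' (ε⁻¹ • W (ε • t) (ω' ε)) (Icc 0 1) ε) →
        ∀ ε ∈ Icc (0:ℝ) 1, ω' ε = ω t x ε) ∧
      (∀ x, ω 0 x 1 = x) ∧
      (∀ t x, HasDerivAt (fun ε : ℝ => ω (ε • t) x 1) (W t (ω t x 1)) 1) :=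
  stmt_3_general N n W hWc K L hbound hLip
end

section
/- Let ν, N ≥ 1 and let e₁,…,e_N ∈ [0,∞)^ν be dilation exponents such that for every μ ∈ {1,…,ν} there exists i with e_i^μ > 0. Let a > 0 and let {ς_j}_{j∈ℕ^ν} be a family of C¹ functions on ℝ^N, each supported in the ball B^N(a) = {t : |t| < a}, with sup_j ‖ς_j‖_{C¹} < ∞, and satisfying the cancellation condition: whenever j_μ ≠ 0, ∫ ς_j(t) dt^μ = 0 for every fixed choice of the remaining coordinates. Then there exists ε > 0, depending only on ν and e, such that for every compactly supported Lipschitz function f : ℝ^N → ℝ there is a constant C_f with |∫_{ℝ^N} ς_j^{(2^j)}(t) f(t) dt| ≤ C_f · 2^{−ε·max_μ j_μ} for all j ∈ ℕ^ν. In particular, the series ∑_{j∈ℕ^ν} ∫ ς_j^{(2^j)}(t) f(t) dt converges absolutely. -/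
open MeasureTheory

open scoped NNReal

/-!
After the change of variables `s = 2^{j·e} t`, the pairing `∫ ς_j^{(2^j)} f` becomes
`∫ ς_j(s) f(2^{-j·e} s) ds`. If `j_μ = max_μ j_μ > 0`, the cancellation of `ς_j` in the
coordinates `t^μ` lets one subtract `f` evaluated at the point whose `t^μ`-coordinates are set
to `0`; these coordinates are shrunk by at least `2^{-ε j_μ}`, with `ε` the least nonzero
exponent, so the Lipschitz bound for `f` yields the decay `2^{-ε max_μ j_μ}`. Summability
follows from `max_μ j_μ ≥ (∑_μ j_μ)/ν`.
-/

/-- The `ν`-parameter dilate `η^{(2^j)}(t) = 2^{j·e₁+⋯+j·e_N} η(2^{j·e₁}t₁,…,2^{j·e_N}t_N)`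
of a function on ℝ^N, for dilation exponents `e` and `j ∈ ℝ^ν`. -/
noncomputable def dilate {ν N : ℕ} (e : Fin N → Fin ν → ℝ) (η : (Fin N → ℝ) → ℝ)
    (j : Fin ν → ℝ) : (Fin N → ℝ) → ℝ :=
  fun t => (2 : ℝ) ^ (∑ i, ∑ μ, j μ * e i μ) *
    η (fun i => (2 : ℝ) ^ (∑ μ, j μ * e i μ) * t i)

theorem integral_comp_mul_pi {ι : Type*} [Fintype ι] {d : ι → ℝ} (hd : ∀ i, d i ≠ 0)
    (g : (ι → ℝ) → ℝ) :
    ∫ t : ι → ℝ, g (fun i => d i * t i) = |∏ i, d i|⁻¹ * ∫ s, g s := by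
  classical
  let D : (ι → ℝ) ≃ᵐ (ι → ℝ) := .piCongrRight fun i => .mulLeft₀ (d i) (hd i)
  have hD_apply : ∀ t, D t = fun i => d i * t i := fun t => rfl
  have hD : ⇑D = Matrix.toLin' (Matrix.diagonal d) := by
    ext t i
    simp [hD_apply, Matrix.mulVec_diagonal]
  have hdet : LinearMap.det (Matrix.toLin' (Matrix.diagonal d)) = ∏ i, d i := by
    rw [LinearMap.det_toLin', Matrix.det_diagonal]
  have hmap : Measure.map D volume = ENNReal.ofReal |(∏ i, d i)⁻¹| • volume := by
    rw [hD, Real.map_linearMap_volume_pi_eq_smul_volume_pi, hdet]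
    exact hdet ▸ Finset.prod_ne_zero_iff.mpr fun i _ => hd i
  simp_rw [← hD_apply]
  rw [← integral_map_equiv D g, hmap, integral_smul_measure, abs_inv,
    ENNReal.toReal_ofReal (by positivity), smul_eq_mul]

theorem integral_dilate_mul {ν N : ℕ} (e : Fin N → Fin ν → ℝ) (η f : (Fin N → ℝ) → ℝ)
    (j : Fin ν → ℝ) :
    ∫ t, dilate e η j t * f t =
      ∫ s, η s * f (fun i => (2 : ℝ) ^ (-∑ μ, j μ * e i μ) * s i) := by
  set d : Fin N → ℝ := fun i => (2 : ℝ) ^ (∑ μ, j μ * e i μ)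
  have hd : ∀ i, 0 < d i := fun i => Real.rpow_pos_of_pos two_pos _
  have hprod : (2 : ℝ) ^ (∑ i, ∑ μ, j μ * e i μ) = ∏ i, d i :=
    Real.rpow_sum_of_pos two_pos _ _
  have hinv : ∀ i, (2 : ℝ) ^ (-∑ μ, j μ * e i μ) = (d i)⁻¹ := fun i =>
    Real.rpow_neg zero_le_two _
  simp_rw [hinv]
  have hcancel : ∀ (t : Fin N → ℝ), (fun i => (d i)⁻¹ * (d i * t i)) = t := fun t =>
    funext fun i => inv_mul_cancel_left₀ (hd i).ne' (t i)
  calc ∫ t, dilate e η j t * f t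
      = ∫ t : Fin N → ℝ,
          (∏ i, d i) * (η (fun i => d i * t i) * f (fun i => (d i)⁻¹ * (d i * t i))) := by
        simp only [dilate, hprod, hcancel, mul_assoc, d]
    _ = ∫ s, η s * f (fun i => (d i)⁻¹ * s i) := by
        rw [integral_const_mul, integral_comp_mul_pi (fun i => (hd i).ne')
          (fun s => η s * f (fun i => (d i)⁻¹ * s i)),
          abs_of_pos (Finset.prod_pos fun i _ => hd i), mul_inv_cancel_left₀]
        exact (Finset.prod_pos fun i _ => hd i).ne'

theorem integral_mul_eq_zero_of_integral_slice_eq_zero {ι : Type*} [Fintype ι]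
    (p : ι → Prop) [DecidablePred p] {g F : (ι → ℝ) → ℝ}
    (hgF : Integrable fun s => g s * F s)
    (hF : ∀ x y : ι → ℝ, (∀ i, ¬ p i → x i = y i) → F x = F y)
    (hg : ∀ c : ι → ℝ, ∫ u : {i // p i} → ℝ, g (fun i => if h : p i then u ⟨i, h⟩ else c i) = 0) :
    ∫ s, g s * F s = 0 := by
  let φ := MeasurableEquiv.piEquivPiSubtypeProd (fun _ : ι => ℝ) p
  have hφ : MeasurePreserving φ := volume_preserving_piEquivPiSubtypeProd _ p
  have hslice : ∀ v : {i // ¬ p i} → ℝ, ∫ u, g (φ.symm (u, v)) * F (φ.symm (u, v)) = 0 := by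
    intro v
    set c := φ.symm (0, v)
    have hv : ∀ u, φ.symm (u, v) = fun i => if h : p i then u ⟨i, h⟩ else c i := by
      intro u; funext i
      by_cases h : p i <;> simp [c, φ, MeasurableEquiv.piEquivPiSubtypeProd,
        Equiv.piEquivPiSubtypeProd, h]
    have hFv : ∀ u, F (φ.symm (u, v)) = F c := fun u =>
      hF _ _ fun i hi => by rw [hv u]; simp [hi]
    simp_rw [hFv, integral_mul_const, hv, hg, zero_mul]
  have hint := (hφ.symm φ).integrable_comp_emb φ.symm.measurableEmbedding |>.mpr hgF
  rw [← (hφ.symm φ).integral_comp φ.symm.measurableEmbedding, Measure.volume_eq_prod,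
    integral_prod_symm (fun z => g (φ.symm z) * F (φ.symm z)) hint]
  simp only [hslice, integral_zero]

theorem summable_pow_sum {r : ℝ} (h0 : 0 ≤ r) (h1 : r < 1) :
    ∀ n : ℕ, Summable fun j : Fin n → ℕ => r ^ ∑ μ, j μ
  | 0 => .of_finite
  | n + 1 => by
    have hprod := (summable_geometric_of_lt_one h0 h1).mul_of_nonneg (summable_pow_sum h0 h1 n)
      (fun _ => pow_nonneg h0 _) fun _ => pow_nonneg h0 _
    refine ((Fin.consEquiv fun _ => ℕ).symm.summable_iff.mpr hprod).congr fun j => ?_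
    simp [Fin.consEquiv, Fin.sum_univ_succ, Fin.tail, pow_add]

theorem summable_pow_sup {n : ℕ} {r : ℝ} (h0 : 0 ≤ r) (h1 : r < 1) :
    Summable fun j : Fin n → ℕ => r ^ Finset.univ.sup j := by
  rcases n.eq_zero_or_pos with rfl | hn
  · exact .of_finite
  set s := r ^ (n : ℝ)⁻¹
  have hs0 : 0 ≤ s := Real.rpow_nonneg h0 _
  have hs1 : s < 1 := Real.rpow_lt_one h0 h1 (by positivity)
  refine (summable_pow_sum hs0 hs1 n).of_nonneg_of_le (fun _ => pow_nonneg h0 _) fun j => ?_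
  have hsum : ∑ μ, j μ ≤ n * Finset.univ.sup j := by
    simpa using Finset.sum_le_card_nsmul Finset.univ j _ fun μ _ =>
      Finset.le_sup (Finset.mem_univ μ)
  calc r ^ Finset.univ.sup j = s ^ (n * Finset.univ.sup j) := by
        rw [pow_mul, Real.rpow_inv_natCast_pow h0 hn.ne']
    _ ≤ s ^ ∑ μ, j μ := pow_le_pow_of_le_one hs0 hs1.le hsum

theorem exists_pos_forall_le_of_pos {ι : Type*} [Finite ι] (x : ι → ℝ) :
    ∃ ε > 0, ∀ i, 0 < x i → ε ≤ x i := by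
  obtain ⟨o, ho⟩ :=
    Finite.exists_min fun o : Option ι => o.elim 1 fun i => if 0 < x i then x i else 1
  refine ⟨_, ?_, fun i hi => by simpa [hi] using ho (some i)⟩
  cases o with
  | none => exact one_pos
  | some i =>
    dsimp only [Option.elim]
    split_ifs with h
    exacts [h, one_pos]

theorem abs_integral_le_of_support_subset {α : Type*} [MeasurableSpace α] {μ : Measure α}
    {g : α → ℝ} {s : Set α} {C : ℝ} (hs : μ s < ⊤) (hgs : Function.support g ⊆ s)
    (hC : ∀ x ∈ s, |g x| ≤ C) :
    |∫ x, g x ∂μ| ≤ C * μ.real s := by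
  rw [← setIntegral_eq_integral_of_forall_compl_eq_zero fun x hx =>
    Function.notMem_support.mp fun hgx => hx (hgs hgx)]
  exact norm_setIntegral_le_of_norm_le_const hs fun x hx =>
    (Real.norm_eq_abs _).trans_le (hC x hx)

theorem rpow_neg_sum_mul_le {ν : ℕ} {j e : Fin ν → ℝ} (hj : ∀ μ, 0 ≤ j μ) (he : ∀ μ, 0 ≤ e μ)
    {ε : ℝ} {μ : Fin ν} (hε : ε ≤ e μ) :
    (2 : ℝ) ^ (-∑ μ', j μ' * e μ') ≤ 2 ^ (-(ε * j μ)) := by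
  refine Real.rpow_le_rpow_of_exponent_le one_le_two (neg_le_neg ?_)
  calc ε * j μ ≤ j μ * e μ := by rw [mul_comm]; exact mul_le_mul_of_nonneg_left hε (hj μ)
    _ ≤ ∑ μ', j μ' * e μ' :=
      Finset.single_le_sum (fun μ' _ => mul_nonneg (hj μ') (he μ')) (Finset.mem_univ μ)

variable {ν N : ℕ} (e : Fin N → Fin ν → ℝ) {η f : (Fin N → ℝ) → ℝ} {a A : ℝ}

theorem abs_integral_dilate_mul_le {B : ℝ} (hη : Function.support η ⊆ Metric.ball 0 a)
    (hA : ∀ t, |η t| ≤ A) (hB : ∀ t, |f t| ≤ B) (j : Fin ν → ℝ) :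
    |∫ t, dilate e η j t * f t| ≤ A * B * volume.real (Metric.ball (0 : Fin N → ℝ) a) := by
  rw [integral_dilate_mul]
  refine abs_integral_le_of_support_subset measure_ball_lt_top
    ((Function.support_mul_subset_left _ _).trans hη) fun s _ => ?_
  rw [abs_mul]
  exact mul_le_mul (hA s) (hB _) (abs_nonneg _) ((abs_nonneg _).trans (hA s))

theorem abs_integral_dilate_mul_le_of_cancel (he : ∀ i μ, 0 ≤ e i μ) {ε : ℝ} {μ : Fin ν}
    (hε : ∀ i, e i μ ≠ 0 → ε ≤ e i μ) {L : ℝ≥0} (hηc : Continuous η)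
    (hη : Function.support η ⊆ Metric.ball 0 a) (hA : ∀ t, |η t| ≤ A) (hf : LipschitzWith L f)
    (hcanc : ∀ c : Fin N → ℝ, ∫ u : {i // e i μ ≠ 0} → ℝ,
      η (fun i => if h : e i μ ≠ 0 then u ⟨i, h⟩ else c i) = 0)
    {j : Fin ν → ℝ} (hj : ∀ μ, 0 ≤ j μ) :
    |∫ t, dilate e η j t * f t| ≤
      A * (L * (2 ^ (-(ε * j μ)) * a)) * volume.real (Metric.ball (0 : Fin N → ℝ) a) := by
  set T : (Fin N → ℝ) → Fin N → ℝ := fun s i => (2 : ℝ) ^ (-∑ μ', j μ' * e i μ') * s i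
  -- `f ∘ P` is constant in the coordinates `t^μ`, so the cancellation of `η` kills it, while
  -- `T` and `P` differ only in these coordinates, which `T` shrinks by at least `2^{-ε j_μ}`.
  set P : (Fin N → ℝ) → Fin N → ℝ := fun s i => if e i μ = 0 then T s i else 0
  have hηcs : HasCompactSupport η := .of_support_subset_isCompact (isCompact_closedBall 0 a)
    (hη.trans Metric.ball_subset_closedBall)
  have hT : Continuous T := by fun_prop
  have hP : Continuous P :=
    continuous_pi fun i => continuous_if_const _ (fun _ => by fun_prop) fun _ => continuous_const
  have hintT : Integrable fun s => η s * f (T s) :=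
    (hηc.mul (hf.continuous.comp hT)).integrable_of_hasCompactSupport hηcs.mul_right
  have hintP : Integrable fun s => η s * f (P s) :=
    (hηc.mul (hf.continuous.comp hP)).integrable_of_hasCompactSupport hηcs.mul_right
  have hzero : ∫ s, η s * f (P s) = 0 := by
    refine integral_mul_eq_zero_of_integral_slice_eq_zero (fun i => e i μ ≠ 0) hintP
      (fun x y hxy => congrArg f (funext fun i => ?_)) hcanc
    by_cases h : e i μ = 0
    · simp only [P, T, if_pos h, hxy i (not_not_intro h)]
    · simp only [P, if_neg h]
  have hTP : ∀ s ∈ Metric.ball 0 a, dist (T s) (P s) ≤ 2 ^ (-(ε * j μ)) * a := by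
    intro s hs
    have ha : 0 ≤ a := (Metric.nonempty_ball.mp ⟨s, hs⟩).le
    refine (dist_pi_le_iff (by positivity)).mpr fun i => ?_
    by_cases h : e i μ = 0
    · simp only [P, if_pos h, dist_self]
      positivity
    · have hsi : |s i| ≤ a :=
        ((norm_le_pi_norm s i).trans_lt (mem_ball_zero_iff.mp hs)).le
      simp only [T, P, if_neg h, Real.dist_eq, sub_zero, abs_mul,
        abs_of_pos (Real.rpow_pos_of_pos two_pos _)]
      exact mul_le_mul (rpow_neg_sum_mul_le hj (he i) (hε i h)) hsi (abs_nonneg _)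
        (by positivity)
  calc |∫ t, dilate e η j t * f t| = |∫ s, η s * (f (T s) - f (P s))| := by
        rw [integral_dilate_mul, ← sub_zero (∫ s, η s * f (T s)), ← hzero,
          ← integral_sub hintT hintP]
        simp only [mul_sub]
    _ ≤ A * (L * (2 ^ (-(ε * j μ)) * a)) * volume.real (Metric.ball (0 : Fin N → ℝ) a) := by
        refine abs_integral_le_of_support_subset measure_ball_lt_top
          ((Function.support_mul_subset_left _ _).trans hη) fun s hs => ?_
        rw [abs_mul]
        refine mul_le_mul (hA s) ?_ (abs_nonneg _) ((abs_nonneg _).trans (hA s))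
        rw [← Real.dist_eq]
        exact (hf.dist_le_mul _ _).trans (mul_le_mul_of_nonneg_left (hTP s hs) L.2)

theorem abs_integral_dilate_mul_le_mul_rpow_sup (he : ∀ i μ, 0 ≤ e i μ) {ε : ℝ}
    (hε : ∀ i μ, e i μ ≠ 0 → ε ≤ e i μ) {L : ℝ≥0} {B : ℝ} (hηc : Continuous η)
    (hη : Function.support η ⊆ Metric.ball 0 a) (hA : ∀ t, |η t| ≤ A) (hB : ∀ t, |f t| ≤ B)
    (hf : LipschitzWith L f) {j : Fin ν → ℕ}
    (hcanc : ∀ μ, j μ ≠ 0 → ∀ c : Fin N → ℝ, ∫ u : {i // e i μ ≠ 0} → ℝ,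
      η (fun i => if h : e i μ ≠ 0 then u ⟨i, h⟩ else c i) = 0) :
    |∫ t, dilate e η (fun μ => (j μ : ℝ)) t * f t| ≤
      A * max B (L * a) * volume.real (Metric.ball (0 : Fin N → ℝ) a) *
        2 ^ (-(ε * ((Finset.univ.sup j : ℕ) : ℝ))) := by
  have hA0 : 0 ≤ A := (abs_nonneg _).trans (hA 0)
  set V := volume.real (Metric.ball (0 : Fin N → ℝ) a)
  rcases Nat.eq_zero_or_pos (Finset.univ.sup j) with h0 | hpos
  · rw [h0, Nat.cast_zero, mul_zero, neg_zero, Real.rpow_zero, mul_one]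
    refine (abs_integral_dilate_mul_le e hη hA hB _).trans ?_
    gcongr
    exact le_max_left _ _
  · obtain ⟨μ, -, hμ⟩ := Finset.exists_mem_eq_sup Finset.univ
      (Finset.nonempty_iff_ne_empty.mpr fun h => by simp [h] at hpos) j
    rw [hμ] at hpos ⊢
    refine (abs_integral_dilate_mul_le_of_cancel e he (hε · μ) hηc hη hA hf (hcanc μ hpos.ne')
      fun _ => Nat.cast_nonneg _).trans ?_
    calc A * (L * (2 ^ (-(ε * (j μ : ℝ))) * a)) * V
        = A * (L * a) * V * 2 ^ (-(ε * (j μ : ℝ))) := by ring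
      _ ≤ A * max B (L * a) * V * 2 ^ (-(ε * (j μ : ℝ))) := by
        gcongr
        exact le_max_right _ _

theorem stmt_11_general (ν N : ℕ) (e : Fin N → Fin ν → ℝ) (he0 : ∀ i μ', 0 ≤ e i μ') :
    ∃ ε > (0:ℝ), ∀ a : ℝ, 0 < a →
      ∀ ς : (Fin ν → ℕ) → (Fin N → ℝ) → ℝ,
      (∀ j, ContDiff ℝ 1 (ς j)) →
      (∀ j, Function.support (ς j) ⊆ Metric.ball 0 a) →
      (∃ A : ℝ, ∀ j t, |ς j t| ≤ A ∧ ‖fderiv ℝ (ς j) t‖ ≤ A) →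
      (∀ (j : Fin ν → ℕ) (μ : Fin ν), j μ ≠ 0 → ∀ c : Fin N → ℝ,
        (∫ u : {i : Fin N // e i μ ≠ 0} → ℝ,
          ς j (fun i => if h : e i μ ≠ 0 then u ⟨i, h⟩ else c i)) = 0) →
      ∀ f : (Fin N → ℝ) → ℝ, HasCompactSupport f → (∃ Lf : NNReal, LipschitzWith Lf f) →
      ∃ Cf : ℝ,
        (∀ j : Fin ν → ℕ,
          |∫ t, dilate e (ς j) (fun μ => (j μ : ℝ)) t * f t|
            ≤ Cf * (2 : ℝ) ^ (-(ε * ((Finset.univ.sup j : ℕ) : ℝ)))) ∧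
        Summable (fun j : Fin ν → ℕ =>
          |∫ t, dilate e (ς j) (fun μ => (j μ : ℝ)) t * f t|) := by
  obtain ⟨ε, hε0, hε⟩ := exists_pos_forall_le_of_pos fun q : Fin N × Fin ν => e q.1 q.2
  refine ⟨ε, hε0, fun a _ ς hς hςa ⟨A, hA⟩ hcanc f hfc ⟨L, hf⟩ => ?_⟩
  obtain ⟨B, hB⟩ := hfc.exists_bound_of_continuous hf.continuous
  obtain ⟨C, hbound⟩ : ∃ C : ℝ, ∀ j : Fin ν → ℕ,
      |∫ t, dilate e (ς j) (fun μ => (j μ : ℝ)) t * f t| ≤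
        C * 2 ^ (-(ε * ((Finset.univ.sup j : ℕ) : ℝ))) :=
    ⟨_, fun j => abs_integral_dilate_mul_le_mul_rpow_sup e he0
      (fun i μ h => hε (i, μ) ((he0 i μ).lt_of_ne' h)) (hς j).continuous (hςa j)
      (fun t => (hA j t).1) (fun t => (Real.norm_eq_abs _).symm.trans_le (hB t)) hf (hcanc j)⟩
  refine ⟨C, hbound, ?_⟩
  have hr : (2 : ℝ) ^ (-ε) < 1 := Real.rpow_lt_one_of_one_lt_of_neg one_lt_two (neg_neg_of_pos hε0)
  refine ((summable_pow_sup (by positivity) hr).mul_left C).of_nonneg_of_le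
    (fun _ => abs_nonneg _) fun j => ?_
  rw [← Real.rpow_mul_natCast zero_le_two, neg_mul]
  exact hbound j

/-- convergence lemma for the kernel class `K̃(N,e,a,[0,1]^ν)`:
there is `ε > 0` (depending only on `ν` and `e`) so that for every bounded family
`{ς_j}` of C¹ functions supported in `B(a)` satisfying the cancellation conditions,
and every compactly supported Lipschitz `f`,
`|∫ ς_j^{(2^j)} f| ≤ C_f 2^{−ε max_μ j_μ}`; in particular `∑_j ∫ ς_j^{(2^j)} f`
converges absolutely. -/
theorem stmt_11 (ν N : ℕ) (hν : 1 ≤ ν) (hN : 1 ≤ N)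
    (e : Fin N → Fin ν → ℝ) (he0 : ∀ i μ', 0 ≤ e i μ')
    (heμ : ∀ μ' : Fin ν, ∃ i, 0 < e i μ') :
    ∃ ε > (0:ℝ), ∀ a : ℝ, 0 < a →
      ∀ ς : (Fin ν → ℕ) → (Fin N → ℝ) → ℝ,
      (∀ j, ContDiff ℝ 1 (ς j)) →
      (∀ j, Function.support (ς j) ⊆ Metric.ball 0 a) →
      (∃ A : ℝ, ∀ j t, |ς j t| ≤ A ∧ ‖fderiv ℝ (ς j) t‖ ≤ A) →
      (∀ (j : Fin ν → ℕ) (μ : Fin ν), j μ ≠ 0 → ∀ c : Fin N → ℝ,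
        (∫ u : {i : Fin N // e i μ ≠ 0} → ℝ,
          ς j (fun i => if h : e i μ ≠ 0 then u ⟨i, h⟩ else c i)) = 0) →
      ∀ f : (Fin N → ℝ) → ℝ, HasCompactSupport f → (∃ Lf : NNReal, LipschitzWith Lf f) →
      ∃ Cf : ℝ,
        (∀ j : Fin ν → ℕ,
          |∫ t, dilate e (ς j) (fun μ => (j μ : ℝ)) t * f t|
            ≤ Cf * (2 : ℝ) ^ (-(ε * ((Finset.univ.sup j : ℕ) : ℝ)))) ∧
        Summable (fun j : Fin ν → ℕ =>
          |∫ t, dilate e (ς j) (fun μ => (j μ : ℝ)) t * f t|) :=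
  stmt_11_general ν N e he0
end

section
/- Let n ≥ 1, δ ∈ (0,1], and C₁, C₂ ∈ (0,∞). Then there exist δ' ∈ (0,∞), depending only on δ and n, and A ∈ (0,∞), depending only on δ, n, C₁, and C₂, with the following property. Let ζ ∈ (0,1], let Ξ be a nonnegative Borel measure on ℝⁿ × ℝⁿ such that: (a) Ξ is supported in the set {(y,z) : |y| ≤ C₁, |z| ≤ C₁, |y − z| ≤ C₁ζ}; and (b) the pushforwards of Ξ under the first and second coordinate projections are each bounded above by C₂ times Lebesgue measure on ℝⁿ. Let h ∈ L¹(ℝⁿ) and suppose C_h ∈ [0,∞) satisfies ∫_{ℝⁿ} |h(y − z) − h(y)| dy ≤ C_h |z|^δ for all z ∈ ℝⁿ. Then ∫_{ℝⁿ×ℝⁿ} |h(y) − h(z)| dΞ(y,z) ≤ A ζ^{δ'} (‖h‖_{L¹} + C_h). -/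
/-!
Mollify `h` at scale `t = K √ζ` by its ball averages `H y = ⨍_{B(0,t)} h (y + w)`. The `L¹_δ`
hypothesis gives `‖h - H‖_{L¹} ≤ C_h t^δ`, and since both marginals of `Ξ` are dominated by
`C₂ • volume`, the terms `|h - H|` at either endpoint cost `O(t^δ)`. For `|y - z| ≤ a = K ζ` the
balls `B(y,t)` and `B(z,t)` differ only inside the annulus `t - a ≤ |u - y| ≤ t + a`, so
`|H y - H z|` is at most the mass of `|h|` on that annulus over `|B(0,t)|`; integrating in `y` and
using Tonelli, this costs `≲ (a / t) ‖h‖_{L¹} = √ζ ‖h‖_{L¹}`. Both terms are `O(ζ^{δ/2})`.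
-/

open MeasureTheory Metric Set Module
open scoped ENNReal symmDiff

theorem add_pow_sub_sub_pow_le {t a : ℝ} (ht : 0 < t) (ha : 0 ≤ a) (hat : a ≤ t) (d : ℕ) :
    (t + a) ^ d - (t - a) ^ d ≤ d * 2 ^ d * (a / t) * t ^ d := by
  obtain _ | d := d
  · simp
  have h := abs_pow_sub_pow_le (t + a) (t - a) (d + 1)
  rw [abs_of_nonneg (by linarith : 0 ≤ t + a), abs_of_nonneg (by linarith : 0 ≤ t - a),
    max_eq_left (by linarith), abs_of_nonneg (by linarith : 0 ≤ t + a - (t - a)),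
    Nat.add_sub_cancel] at h
  calc (t + a) ^ (d + 1) - (t - a) ^ (d + 1)
      ≤ (t + a - (t - a)) * ↑(d + 1) * (t + a) ^ d := (le_abs_self _).trans h
    _ ≤ 2 * a * ↑(d + 1) * (2 * t) ^ d := by
        rw [show t + a - (t - a) = 2 * a by ring]
        gcongr
        linarith
    _ = ↑(d + 1) * 2 ^ (d + 1) * (a / t) * t ^ (d + 1) := by
        field_simp
        ring

section Annulus

variable {X : Type*} [PseudoMetricSpace X] {x y : X} {r R a t : ℝ}

def annulus (x : X) (r R : ℝ) : Set X := closedBall x R \ ball x r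

theorem mem_annulus : y ∈ annulus x r R ↔ r ≤ dist y x ∧ dist y x ≤ R := by
  simp [annulus, and_comm]

theorem symmDiff_ball_subset_annulus (h : dist x y ≤ a) :
    ball x t ∆ ball y t ⊆ annulus x (t - a) (t + a) := by
  rintro u (⟨hux, huy⟩ | ⟨huy, hux⟩) <;>
    simp only [mem_ball, not_lt] at hux huy <;>
    rw [mem_annulus] <;>
    constructor <;> linarith [dist_triangle u x y, dist_triangle u y x, dist_comm x y]

variable [MeasurableSpace X] [OpensMeasurableSpace X]

theorem measurableSet_annulus : MeasurableSet (annulus x r R) :=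
  measurableSet_closedBall.diff measurableSet_ball

variable (μ : Measure X)

theorem setLIntegral_annulus_eq_lintegral_indicator (F : X → ℝ≥0∞) (x : X) :
    ∫⁻ y in annulus x r R, F y ∂μ
      = ∫⁻ y, {p : X × X | p.2 ∈ annulus p.1 r R}.indicator (F ∘ Prod.snd) (x, y) ∂μ := by
  rw [← lintegral_indicator measurableSet_annulus]
  rfl

variable [SecondCountableTopology X]

theorem measurableSet_setOf_mem_annulus :
    MeasurableSet {p : X × X | p.2 ∈ annulus p.1 r R} := by
  simp only [mem_annulus]
  have hd : Measurable fun p : X × X => dist p.2 p.1 := measurable_snd.dist measurable_fst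
  exact (measurableSet_le measurable_const hd).inter (measurableSet_le hd measurable_const)

variable [SFinite μ] {F : X → ℝ≥0∞}

theorem Measurable.setLIntegral_annulus (hF : Measurable F) :
    Measurable fun x => ∫⁻ y in annulus x r R, F y ∂μ := by
  simp only [setLIntegral_annulus_eq_lintegral_indicator]
  exact ((hF.comp measurable_snd).indicator measurableSet_setOf_mem_annulus).lintegral_prod_right'

theorem lintegral_setLIntegral_annulus (hF : Measurable F) :
    ∫⁻ x, ∫⁻ y in annulus x r R, F y ∂μ ∂μ = ∫⁻ y, μ (annulus y r R) * F y ∂μ := by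
  simp only [setLIntegral_annulus_eq_lintegral_indicator]
  rw [lintegral_lintegral_swap (by
    exact ((hF.comp measurable_snd).indicator measurableSet_setOf_mem_annulus).aemeasurable)]
  refine lintegral_congr fun y => ?_
  rw [mul_comm, ← setLIntegral_const, ← lintegral_indicator measurableSet_annulus]
  congr 1 with x
  simp only [indicator, mem_ofPred_eq, Function.comp_apply, mem_annulus, dist_comm]

end Annulus

section Integral

variable {α G : Type*} [MeasurableSpace α] [NormedAddCommGroup G] [NormedSpace ℝ G]

theorem enorm_inv_measureReal_le (μ : Measure α) (s : Set α) : ‖(μ.real s)⁻¹‖ₑ ≤ (μ s)⁻¹ := by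
  rw [measureReal_def, Real.enorm_eq_ofReal_abs, abs_inv, ENNReal.abs_toReal,
    ← ENNReal.toReal_inv]
  exact ENNReal.ofReal_toReal_le

theorem enorm_average_le_laverage (μ : Measure α) (f : α → G) :
    ‖⨍ x, f x ∂μ‖ₑ ≤ ⨍⁻ x, ‖f x‖ₑ ∂μ := by
  rw [average_eq, laverage_eq, enorm_smul, ENNReal.div_eq_inv_mul]
  exact mul_le_mul' (enorm_inv_measureReal_le μ univ) (enorm_integral_le_lintegral_enorm f)

theorem enorm_setIntegral_sub_setIntegral_le {μ : Measure α} {f : α → G} {s u : Set α}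
    (hs : MeasurableSet s) (hu : MeasurableSet u) (hfs : IntegrableOn f s μ)
    (hfu : IntegrableOn f u μ) :
    ‖∫ x in s, f x ∂μ - ∫ x in u, f x ∂μ‖ₑ ≤ ∫⁻ x in s ∆ u, ‖f x‖ₑ ∂μ := by
  rw [← integral_indicator hs, ← integral_indicator hu, ← integral_sub
    ((integrable_indicator_iff hs).2 hfs) ((integrable_indicator_iff hu).2 hfu),
    ← lintegral_indicator (hs.symmDiff hu)]
  refine (enorm_integral_le_lintegral_enorm _).trans (lintegral_mono fun x => ?_)
  by_cases hxs : x ∈ s <;> by_cases hxu : x ∈ u <;> simp [hxs, hxu, indicator, mem_symmDiff]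

theorem lintegral_comp_le_of_map_le {β : Type*} [MeasurableSpace β] {ν : Measure α}
    {μ : Measure β} {π : α → β} (hπ : Measurable π) {c : ℝ≥0∞} (h : ν.map π ≤ c • μ)
    {Φ : β → ℝ≥0∞} (hΦ : Measurable Φ) :
    ∫⁻ x, Φ (π x) ∂ν ≤ c * ∫⁻ y, Φ y ∂μ := by
  rw [← lintegral_map hΦ hπ, ← smul_eq_mul, ← lintegral_smul_measure]
  exact lintegral_mono' h le_rfl

end Integral

theorem setIntegral_ball_zero_comp_add {G F : Type*} [NormedAddCommGroup G] [MeasurableSpace G]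
    [BorelSpace G] {μ : Measure G} [μ.IsAddLeftInvariant] [NormedAddCommGroup F]
    [NormedSpace ℝ F] (g : G → F) (y : G) (t : ℝ) :
    ∫ w in ball (0 : G) t, g (y + w) ∂μ = ∫ u in ball y t, g u ∂μ := by
  have := (measurePreserving_add_left μ y).setIntegral_preimage_emb
    (measurableEmbedding_addLeft y) g (ball y t)
  rwa [preimage_add_ball, sub_self] at this

section AddHaar

variable {E F : Type*} [NormedAddCommGroup E] [MeasurableSpace E] [BorelSpace E]
  {μ : Measure E} [μ.IsAddHaarMeasure] [NormedAddCommGroup F]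

theorem lintegral_enorm_sub_comp_add_le {g : E → F} (hg : Integrable g μ) {C δ t : ℝ}
    (hC : 0 ≤ C) (hδ : 0 ≤ δ) (hmod : ∀ z, ∫ y, ‖g (y - z) - g y‖ ∂μ ≤ C * ‖z‖ ^ δ) {w : E}
    (hw : w ∈ ball (0 : E) t) :
    ∫⁻ y, ‖g y - g (y + w)‖ₑ ∂μ ≤ ENNReal.ofReal (C * t ^ δ) := by
  rw [← ofReal_integral_norm_eq_lintegral_enorm (f := fun y => g y - g (y + w))
    (hg.sub (hg.comp_add_right w))]
  refine ENNReal.ofReal_le_ofReal ?_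
  calc ∫ y, ‖g y - g (y + w)‖ ∂μ = ∫ y, ‖g (y - -w) - g y‖ ∂μ := by
        simp only [sub_neg_eq_add, norm_sub_rev]
    _ ≤ C * ‖-w‖ ^ δ := hmod (-w)
    _ ≤ C * t ^ δ := by
        rw [norm_neg]
        gcongr
        exact (mem_ball_zero_iff.1 hw).le

variable [NormedSpace ℝ F]

noncomputable def ballAverage (μ : Measure E) (t : ℝ) (g : E → F) (y : E) : F :=
  ⨍ w in ball (0 : E) t, g (y + w) ∂μ

theorem enorm_ballAverage_sub_le {g : E → F} (hg : Integrable g μ) {y z : E} {t a : ℝ}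
    (hyz : dist y z ≤ a) :
    ‖ballAverage μ t g y - ballAverage μ t g z‖ₑ
      ≤ (μ (ball 0 t))⁻¹ * ∫⁻ u in annulus y (t - a) (t + a), ‖g u‖ₑ ∂μ := by
  simp only [ballAverage, setAverage_eq, setIntegral_ball_zero_comp_add, ← smul_sub, enorm_smul]
  gcongr
  · exact enorm_inv_measureReal_le μ _
  · exact (enorm_setIntegral_sub_setIntegral_le measurableSet_ball measurableSet_ball
      hg.integrableOn hg.integrableOn).trans (lintegral_mono_set (symmDiff_ball_subset_annulus hyz))

variable [NormedSpace ℝ E] [FiniteDimensional ℝ E]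

theorem addHaar_annulus_le [Nontrivial E] (x : E) {t a : ℝ} (ht : 0 < t) (ha : 0 ≤ a)
    (hat : a ≤ t) :
    μ (annulus x (t - a) (t + a))
      ≤ ENNReal.ofReal (finrank ℝ E * 2 ^ finrank ℝ E * (a / t)) * μ (ball x t) := by
  set d := finrank ℝ E
  calc μ (annulus x (t - a) (t + a))
      = μ (closedBall x (t + a)) - μ (ball x (t - a)) :=
        measure_sdiff ((ball_subset_ball (by linarith)).trans ball_subset_closedBall)
          measurableSet_ball.nullMeasurableSet measure_ball_lt_top.ne
    _ = (ENNReal.ofReal ((t + a) ^ d) - ENNReal.ofReal ((t - a) ^ d)) * μ (ball 0 1) := by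
        rw [Measure.addHaar_closedBall μ x (by linarith), Measure.addHaar_ball μ x (by linarith),
          ENNReal.sub_mul fun _ _ => measure_ball_lt_top.ne]
    _ = ENNReal.ofReal ((t + a) ^ d - (t - a) ^ d) * μ (ball 0 1) := by
        rw [ENNReal.ofReal_sub _ (pow_nonneg (by linarith) _)]
    _ ≤ ENNReal.ofReal (d * 2 ^ d * (a / t) * t ^ d) * μ (ball 0 1) := by
        gcongr
        exact add_pow_sub_sub_pow_le ht ha hat d
    _ = ENNReal.ofReal (d * 2 ^ d * (a / t)) * μ (ball x t) := by
        rw [Measure.addHaar_ball μ x ht.le, ENNReal.ofReal_mul (by positivity), mul_assoc]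

theorem MeasureTheory.StronglyMeasurable.ballAverage {g : E → F} (hg : StronglyMeasurable g)
    (t : ℝ) : StronglyMeasurable (ballAverage μ t g) := by
  unfold _root_.ballAverage
  simp_rw [setAverage_eq]
  exact ((hg.comp_measurable measurable_add).integral_prod_right').const_smul _

theorem lintegral_enorm_ballAverage_sub_le [Nontrivial E] {Ξ : Measure (E × E)} {c : ℝ≥0∞}
    (hfst : Ξ.map Prod.fst ≤ c • μ) {g : E → F} (hg : Integrable g μ)
    (hgm : StronglyMeasurable g) {t a : ℝ} (ht : 0 < t) (ha : 0 ≤ a) (hat : a ≤ t)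
    (hΞ : ∀ᵐ p ∂Ξ, dist p.1 p.2 ≤ a) :
    ∫⁻ p, ‖ballAverage μ t g p.1 - ballAverage μ t g p.2‖ₑ ∂Ξ
      ≤ c * ENNReal.ofReal (finrank ℝ E * 2 ^ finrank ℝ E * (a / t)) * ∫⁻ u, ‖g u‖ₑ ∂μ := by
  set V := μ (ball (0 : E) t)
  set κ := ENNReal.ofReal (finrank ℝ E * 2 ^ finrank ℝ E * (a / t))
  have hV0 : V ≠ 0 := (measure_ball_pos μ 0 ht).ne'
  have hVT : V ≠ ⊤ := measure_ball_lt_top.ne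
  calc ∫⁻ p, ‖ballAverage μ t g p.1 - ballAverage μ t g p.2‖ₑ ∂Ξ
      ≤ ∫⁻ p, V⁻¹ * ∫⁻ u in annulus p.1 (t - a) (t + a), ‖g u‖ₑ ∂μ ∂Ξ :=
        lintegral_mono_ae (hΞ.mono fun p hp => enorm_ballAverage_sub_le hg hp)
    _ = V⁻¹ * ∫⁻ p, ∫⁻ u in annulus p.1 (t - a) (t + a), ‖g u‖ₑ ∂μ ∂Ξ :=
        lintegral_const_mul' _ _ (ENNReal.inv_ne_top.2 hV0)
    _ ≤ V⁻¹ * (c * ∫⁻ y, ∫⁻ u in annulus y (t - a) (t + a), ‖g u‖ₑ ∂μ ∂μ) := by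
        gcongr
        exact lintegral_comp_le_of_map_le measurable_fst hfst
          (hgm.enorm.setLIntegral_annulus μ)
    _ = V⁻¹ * (c * ∫⁻ u, μ (annulus u (t - a) (t + a)) * ‖g u‖ₑ ∂μ) := by
        rw [lintegral_setLIntegral_annulus μ hgm.enorm]
    _ ≤ V⁻¹ * (c * ∫⁻ u, κ * V * ‖g u‖ₑ ∂μ) := by
        gcongr with u
        exact (addHaar_annulus_le u ht ha hat).trans_eq (by rw [Measure.addHaar_ball_center])
    _ = c * κ * ∫⁻ u, ‖g u‖ₑ ∂μ := by
        rw [lintegral_const_mul' _ _ (ENNReal.mul_ne_top ENNReal.ofReal_ne_top hVT),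
          show V⁻¹ * (c * (κ * V * ∫⁻ u, ‖g u‖ₑ ∂μ)) = V⁻¹ * V * (c * κ * ∫⁻ u, ‖g u‖ₑ ∂μ) by ring,
          ENNReal.inv_mul_cancel hV0 hVT, one_mul]

variable [CompleteSpace F]

theorem sub_ballAverage_eq_setAverage {g : E → F} (hg : Integrable g μ) (y : E) {t : ℝ}
    (ht : 0 < t) :
    g y - ballAverage μ t g y = ⨍ w in ball (0 : E) t, (g y - g (y + w)) ∂μ := by
  have h0 : μ (ball (0 : E) t) ≠ 0 := (measure_ball_pos μ 0 ht).ne'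
  have hT : μ (ball (0 : E) t) ≠ ⊤ := measure_ball_lt_top.ne
  rw [ballAverage, setAverage_eq, setAverage_eq, integral_sub (integrableOn_const hT).integrable
    (hg.comp_add_left y).integrableOn, smul_sub, setIntegral_const, smul_smul,
    measureReal_def, inv_mul_cancel₀ (ENNReal.toReal_ne_zero.2 ⟨h0, hT⟩), one_smul]

theorem lintegral_enorm_sub_ballAverage_le {g : E → F} (hg : Integrable g μ)
    (hgm : StronglyMeasurable g) {t : ℝ} (ht : 0 < t) {M : ℝ≥0∞}
    (hM : ∀ w ∈ ball (0 : E) t, ∫⁻ y, ‖g y - g (y + w)‖ₑ ∂μ ≤ M) :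
    ∫⁻ y, ‖g y - ballAverage μ t g y‖ₑ ∂μ ≤ M := by
  have h0 : μ (ball (0 : E) t) ≠ 0 := (measure_ball_pos μ 0 ht).ne'
  have hT : μ (ball (0 : E) t) ≠ ⊤ := measure_ball_lt_top.ne
  have hG : Measurable fun p : E × E => ‖g p.1 - g (p.1 + p.2)‖ₑ :=
    ((hgm.comp_measurable measurable_fst).sub (hgm.comp_measurable measurable_add)).enorm
  calc ∫⁻ y, ‖g y - ballAverage μ t g y‖ₑ ∂μ
      ≤ ∫⁻ y, ⨍⁻ w in ball (0 : E) t, ‖g y - g (y + w)‖ₑ ∂μ ∂μ := by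
        refine lintegral_mono fun y => ?_
        rw [sub_ballAverage_eq_setAverage hg y ht]
        exact enorm_average_le_laverage _ _
    _ = ⨍⁻ w in ball (0 : E) t, ∫⁻ y, ‖g y - g (y + w)‖ₑ ∂μ ∂μ := by
        simp only [setLAverage_eq']
        exact lintegral_lintegral_swap hG.aemeasurable
    _ ≤ M := by
        rw [setLAverage_eq, ENNReal.div_le_iff h0 hT, ← setLIntegral_const]
        exact setLIntegral_mono measurable_const hM

theorem lintegral_enorm_sub_le_of_stronglyMeasurable [Nontrivial E] {Ξ : Measure (E × E)}
    {c : ℝ≥0∞} (hfst : Ξ.map Prod.fst ≤ c • μ) (hsnd : Ξ.map Prod.snd ≤ c • μ) {g : E → F}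
    (hg : Integrable g μ) (hgm : StronglyMeasurable g) {t a : ℝ} (ht : 0 < t) (ha : 0 ≤ a)
    (hat : a ≤ t) (hΞ : ∀ᵐ p ∂Ξ, dist p.1 p.2 ≤ a) {M : ℝ≥0∞}
    (hM : ∀ w ∈ ball (0 : E) t, ∫⁻ y, ‖g y - g (y + w)‖ₑ ∂μ ≤ M) :
    ∫⁻ p, ‖g p.1 - g p.2‖ₑ ∂Ξ
      ≤ c * (2 * M + ENNReal.ofReal (finrank ℝ E * 2 ^ finrank ℝ E * (a / t))
        * ∫⁻ u, ‖g u‖ₑ ∂μ) := by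
  set H := ballAverage μ t g
  have hH : StronglyMeasurable H := hgm.ballAverage t
  have hdev : ∀ π : E × E → E, Measurable π → Ξ.map π ≤ c • μ →
      ∫⁻ p, ‖g (π p) - H (π p)‖ₑ ∂Ξ ≤ c * M := fun π hπ h =>
    (lintegral_comp_le_of_map_le hπ h (hgm.sub hH).enorm).trans
      (by gcongr; exact lintegral_enorm_sub_ballAverage_le hg hgm ht hM)
  calc ∫⁻ p, ‖g p.1 - g p.2‖ₑ ∂Ξ
      ≤ ∫⁻ p, ‖g p.1 - H p.1‖ₑ + ‖H p.1 - H p.2‖ₑ + ‖g p.2 - H p.2‖ₑ ∂Ξ := by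
        refine lintegral_mono fun p => ?_
        simp only [← edist_eq_enorm_sub]
        exact (edist_triangle4 _ (H p.1) (H p.2) _).trans_eq (by rw [edist_comm (H p.2)])
    _ = ∫⁻ p, ‖g p.1 - H p.1‖ₑ ∂Ξ + ∫⁻ p, ‖H p.1 - H p.2‖ₑ ∂Ξ + ∫⁻ p, ‖g p.2 - H p.2‖ₑ ∂Ξ := by
        have hm₁ : Measurable fun p : E × E => ‖g p.1 - H p.1‖ₑ :=
          ((hgm.comp_measurable measurable_fst).sub (hH.comp_measurable measurable_fst)).enorm
        have hm₃ : Measurable fun p : E × E => ‖g p.2 - H p.2‖ₑ :=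
          ((hgm.comp_measurable measurable_snd).sub (hH.comp_measurable measurable_snd)).enorm
        rw [lintegral_add_right _ hm₃, lintegral_add_left hm₁]
    _ ≤ c * M + c * ENNReal.ofReal (finrank ℝ E * 2 ^ finrank ℝ E * (a / t))
          * ∫⁻ u, ‖g u‖ₑ ∂μ + c * M := by
        gcongr
        · exact hdev Prod.fst measurable_fst hfst
        · exact lintegral_enorm_ballAverage_sub_le hfst hg hgm ht ha hat hΞ
        · exact hdev Prod.snd measurable_snd hsnd
    _ = _ := by ring

theorem lintegral_enorm_sub_le_of_map_le [Nontrivial E] {Ξ : Measure (E × E)} {c : ℝ≥0∞}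
    (hfst : Ξ.map Prod.fst ≤ c • μ) (hsnd : Ξ.map Prod.snd ≤ c • μ) {g : E → F}
    (hg : Integrable g μ) {t a : ℝ} (ht : 0 < t) (ha : 0 ≤ a) (hat : a ≤ t)
    (hΞ : ∀ᵐ p ∂Ξ, dist p.1 p.2 ≤ a) {M : ℝ≥0∞}
    (hM : ∀ w ∈ ball (0 : E) t, ∫⁻ y, ‖g y - g (y + w)‖ₑ ∂μ ≤ M) :
    ∫⁻ p, ‖g p.1 - g p.2‖ₑ ∂Ξ
      ≤ c * (2 * M + ENNReal.ofReal (finrank ℝ E * 2 ^ finrank ℝ E * (a / t))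
        * ∫⁻ u, ‖g u‖ₑ ∂μ) := by
  set g' := hg.1.mk g
  have hgg' : g =ᵐ[μ] g' := hg.1.ae_eq_mk
  have hcomp : ∀ π : E × E → E, Measurable π → Ξ.map π ≤ c • μ → g ∘ π =ᵐ[Ξ] g' ∘ π :=
    fun π hπ h => Measure.QuasiMeasurePreserving.ae_eq_comp
      ⟨hπ, Measure.absolutelyContinuous_of_le_smul h⟩ hgg'
  have hΞg : ∫⁻ p, ‖g p.1 - g p.2‖ₑ ∂Ξ = ∫⁻ p, ‖g' p.1 - g' p.2‖ₑ ∂Ξ := by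
    refine lintegral_congr_ae ?_
    filter_upwards [hcomp _ measurable_fst hfst, hcomp _ measurable_snd hsnd] with p h1 h2
    simp only [Function.comp_apply] at h1 h2
    rw [h1, h2]
  have hL : ∫⁻ u, ‖g u‖ₑ ∂μ = ∫⁻ u, ‖g' u‖ₑ ∂μ :=
    lintegral_congr_ae (hgg'.mono fun u hu => by simp only [hu])
  rw [hΞg, hL]
  refine lintegral_enorm_sub_le_of_stronglyMeasurable hfst hsnd (hg.congr hgg')
    hg.1.stronglyMeasurable_mk ht ha hat hΞ fun w hw => (hM w hw).trans_eq' ?_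
  refine lintegral_congr_ae ?_
  filter_upwards [hgg', (measurePreserving_add_right μ w).quasiMeasurePreserving.ae_eq_comp hgg']
    with y h1 h2
  simp only [Function.comp_apply] at h2
  rw [h1, h2]

theorem lintegral_enorm_sub_le_of_translate_modulus [Nontrivial E] {Ξ : Measure (E × E)}
    {c : ℝ≥0∞} (hfst : Ξ.map Prod.fst ≤ c • μ) (hsnd : Ξ.map Prod.snd ≤ c • μ) {g : E → F}
    (hg : Integrable g μ) {C δ : ℝ} (hC : 0 ≤ C) (hδ : δ ∈ Icc 0 1)
    (hmod : ∀ z, ∫ y, ‖g (y - z) - g y‖ ∂μ ≤ C * ‖z‖ ^ δ) {K ζ : ℝ} (hK : 0 < K)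
    (hζ : ζ ∈ Ioc 0 1) (hΞ : ∀ᵐ p ∂Ξ, dist p.1 p.2 ≤ K * ζ) :
    ∫⁻ p, ‖g p.1 - g p.2‖ₑ ∂Ξ
      ≤ c * ENNReal.ofReal ((2 * K ^ δ + finrank ℝ E * 2 ^ finrank ℝ E) * ζ ^ (δ / 2)
        * ((∫ y, ‖g y‖ ∂μ) + C)) := by
  obtain ⟨hδ0, hδ1⟩ := hδ
  obtain ⟨hζ0, hζ1⟩ := hζ
  set d := finrank ℝ E
  set L := ∫ y, ‖g y‖ ∂μ
  have hL : 0 ≤ L := integral_nonneg fun _ => norm_nonneg _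
  have hsqrt : √ζ ≤ ζ ^ (δ / 2) := by
    rw [Real.sqrt_eq_rpow]
    exact Real.rpow_le_rpow_of_exponent_ge hζ0 hζ1 (by linarith)
  have hζs : ζ ≤ √ζ := Real.le_sqrt_of_sq_le (by nlinarith)
  have ht : 0 < K * √ζ := by positivity
  have hratio : K * ζ / (K * √ζ) = √ζ := by
    rw [mul_div_mul_left _ _ hK.ne', Real.div_sqrt]
  have hpow : (K * √ζ) ^ δ = K ^ δ * ζ ^ (δ / 2) := by
    rw [Real.mul_rpow hK.le (Real.sqrt_nonneg _), Real.sqrt_eq_rpow, ← Real.rpow_mul hζ0.le]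
    ring_nf
  refine (lintegral_enorm_sub_le_of_map_le hfst hsnd hg ht (by positivity)
    (by gcongr) hΞ fun w hw => lintegral_enorm_sub_comp_add_le hg hC hδ0 hmod hw).trans ?_
  rw [← ofReal_integral_norm_eq_lintegral_enorm hg, hratio, hpow]
  gcongr
  calc 2 * ENNReal.ofReal (C * (K ^ δ * ζ ^ (δ / 2))) + ENNReal.ofReal (d * 2 ^ d * √ζ)
        * ENNReal.ofReal L
      = ENNReal.ofReal (2 * (C * (K ^ δ * ζ ^ (δ / 2))) + d * 2 ^ d * √ζ * L) := by
        rw [ENNReal.ofReal_add (by positivity) (by positivity),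
          ENNReal.ofReal_mul (p := d * 2 ^ d * √ζ) (by positivity),
          ENNReal.ofReal_mul (p := 2) zero_le_two, ENNReal.ofReal_ofNat]
    _ ≤ ENNReal.ofReal ((2 * K ^ δ + d * 2 ^ d) * ζ ^ (δ / 2) * (L + C)) := by
        refine ENNReal.ofReal_le_ofReal ?_
        have h1 : d * 2 ^ d * √ζ * L ≤ d * 2 ^ d * ζ ^ (δ / 2) * L := by gcongr
        have h2 : 0 ≤ K ^ δ * ζ ^ (δ / 2) * L := by positivity
        have h3 : 0 ≤ d * 2 ^ d * ζ ^ (δ / 2) * C := by positivity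
        nlinarith

end AddHaar

theorem stmt_13_general (n : ℕ) (hn : 1 ≤ n) (δ : ℝ) (hδ : δ ∈ Set.Ioc (0:ℝ) 1)
    (C₁ C₂ : ℝ) (hC₂ : 0 < C₂) :
    ∃ δ' > (0:ℝ), ∃ A > (0:ℝ),
      ∀ ζ : ℝ, ζ ∈ Set.Ioc (0:ℝ) 1 →
      ∀ Ξ : Measure (EuclideanSpace ℝ (Fin n) × EuclideanSpace ℝ (Fin n)),
        Ξ {p | ¬ (‖p.1‖ ≤ C₁ ∧ ‖p.2‖ ≤ C₁ ∧ ‖p.1 - p.2‖ ≤ C₁ * ζ)} = 0 →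
        Ξ.map Prod.fst ≤ (ENNReal.ofReal C₂) • volume →
        Ξ.map Prod.snd ≤ (ENNReal.ofReal C₂) • volume →
      ∀ (h : EuclideanSpace ℝ (Fin n) → ℝ) (Ch : ℝ),
        Integrable h → 0 ≤ Ch →
        (∀ z : EuclideanSpace ℝ (Fin n), (∫ y, |h (y - z) - h y|) ≤ Ch * ‖z‖ ^ δ) →
        (∫⁻ p, ENNReal.ofReal |h p.1 - h p.2| ∂Ξ)
          ≤ ENNReal.ofReal (A * ζ ^ δ' * ((∫ y, |h y|) + Ch)) := by
  have : Nonempty (Fin n) := ⟨⟨0, hn⟩⟩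
  set K := max C₁ 1
  have hK : 0 < K := lt_max_of_lt_right one_pos
  refine ⟨δ / 2, half_pos hδ.1, C₂ * (2 * K ^ δ + n * 2 ^ n), by positivity, ?_⟩
  intro ζ hζ Ξ hsupp hfst hsnd h Ch hh hCh hmod
  have hΞ : ∀ᵐ p ∂Ξ, dist p.1 p.2 ≤ K * ζ := (ae_iff.2 hsupp).mono fun p hp => by
    rw [dist_eq_norm]
    exact hp.2.2.trans (mul_le_mul_of_nonneg_right (le_max_left _ _) hζ.1.le)
  have key := lintegral_enorm_sub_le_of_translate_modulus hfst hsnd hh hCh (Ioc_subset_Icc_self hδ)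
    (by simpa only [Real.norm_eq_abs] using hmod) hK hζ hΞ
  simp only [Real.enorm_eq_ofReal_abs, Real.norm_eq_abs, finrank_euclideanSpace_fin,
    ← ENNReal.ofReal_mul hC₂.le] at key
  exact key.trans_eq (by ring_nf)

/-- integral estimate against measures supported near the diagonal for
functions with an `L¹_δ` modulus of continuity (Proposition 13.1 of
Christ–Nagel–Stein–Wainger, as used in the paper). -/
theorem stmt_13 (n : ℕ) (hn : 1 ≤ n) (δ : ℝ) (hδ : δ ∈ Set.Ioc (0:ℝ) 1)
    (C₁ C₂ : ℝ) (hC₁ : 0 < C₁) (hC₂ : 0 < C₂) :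
    ∃ δ' > (0:ℝ), ∃ A > (0:ℝ),
      ∀ ζ : ℝ, ζ ∈ Set.Ioc (0:ℝ) 1 →
      ∀ Ξ : Measure (EuclideanSpace ℝ (Fin n) × EuclideanSpace ℝ (Fin n)),
        Ξ {p | ¬ (‖p.1‖ ≤ C₁ ∧ ‖p.2‖ ≤ C₁ ∧ ‖p.1 - p.2‖ ≤ C₁ * ζ)} = 0 →
        Ξ.map Prod.fst ≤ (ENNReal.ofReal C₂) • volume →
        Ξ.map Prod.snd ≤ (ENNReal.ofReal C₂) • volume →
      ∀ (h : EuclideanSpace ℝ (Fin n) → ℝ) (Ch : ℝ),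
        Integrable h → 0 ≤ Ch →
        (∀ z : EuclideanSpace ℝ (Fin n), (∫ y, |h (y - z) - h y|) ≤ Ch * ‖z‖ ^ δ) →
        (∫⁻ p, ENNReal.ofReal |h p.1 - h p.2| ∂Ξ)
          ≤ ENNReal.ofReal (A * ζ ^ δ' * ((∫ y, |h y|) + Ch)) :=
  stmt_13_general n hn δ hδ C₁ C₂ hC₂
end

section
/- Let g : (0,∞) → ℝ be given by g(x) = exp(−1/x²), and for j ∈ ℕ let g^{(j)} denote its j-th derivative. For every integer m ≥ 1, there do NOT exist a constant M < ∞ and functions c₀,…,c_{m−1} : (0,1] × (0,1) → ℝ and c : (0,1] × (0,1) → ℝ, all bounded in absolute value by M, such that δ·g^{(m)}(x) = ∑_{j=0}^{m−1} δ·c_j(δ,x)·g^{(j)}(x) + δ²·c(δ,x) for all δ ∈ (0,1] and all x ∈ (0,1). -/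
/-- The function `g(x) = exp(−1/x²)`. -/
noncomputable def gfun : ℝ → ℝ := fun x => Real.exp (-(1 / x ^ 2))

open Polynomial Filter Asymptotics Set Topology

/-!
By induction, `g⁽ⁿ⁾(x) = Pₙ(1/x) g(x)` for a polynomial `Pₙ` of degree exactly `3n`.
Dividing the identity by `δ` and letting `δ → 0` gives `|g⁽ᵐ⁾(x)| ≤ M ∑_{j<m} |g⁽ʲ⁾(x)|` on
`(0,1)`; dividing by `g(x) > 0` and substituting `u = 1/x` yields
`|Pₘ(u)| ≤ M ∑_{j<m} |Pⱼ(u)|` for all `u > 1`, which is impossible since each `Pⱼ`, `j < m`,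
has smaller degree than `Pₘ` and hence is `o(Pₘ)` at infinity.
-/

noncomputable def gfunDerivPoly : ℕ → ℝ[X]
  | 0 => 1
  | n + 1 => 2 * X ^ 3 * gfunDerivPoly n - X ^ 2 * derivative (gfunDerivPoly n)

lemma natDegree_gfunDerivPoly_le (n : ℕ) : (gfunDerivPoly n).natDegree ≤ 3 * n := by
  induction n with
  | zero => simp [gfunDerivPoly]
  | succ n ih =>
    have hderiv := natDegree_derivative_le (gfunDerivPoly n)
    refine (natDegree_sub_le _ _).trans (max_le ?_ ?_)
    · refine natDegree_mul_le.trans ?_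
      have := natDegree_mul_le (p := (2 : ℝ[X])) (q := X ^ 3)
      simp only [natDegree_ofNat, natDegree_X_pow] at this ⊢
      omega
    · refine natDegree_mul_le.trans ?_
      rw [natDegree_X_pow]
      omega

lemma coeff_gfunDerivPoly_three_mul (n : ℕ) : (gfunDerivPoly n).coeff (3 * n) = 2 ^ n := by
  induction n with
  | zero => simp [gfunDerivPoly]
  | succ n ih =>
    have hderiv : (derivative (gfunDerivPoly n)).coeff (3 * n + 1) = 0 :=
      coeff_eq_zero_of_natDegree_lt <|
        (natDegree_derivative_le _).trans_lt (by have := natDegree_gfunDerivPoly_le n; omega)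
    rw [gfunDerivPoly, coeff_sub, mul_comm (X ^ 2), mul_assoc, mul_comm (X ^ 3),
      show 3 * (n + 1) = 3 * n + 3 by ring, coeff_ofNat_mul, coeff_mul_X_pow,
      show 3 * n + 3 = 3 * n + 1 + 2 by ring, coeff_mul_X_pow, ih, hderiv]
    ring

lemma natDegree_gfunDerivPoly (n : ℕ) : (gfunDerivPoly n).natDegree = 3 * n :=
  natDegree_eq_of_le_of_coeff_ne_zero (natDegree_gfunDerivPoly_le n)
    (by rw [coeff_gfunDerivPoly_three_mul]; positivity)

lemma gfunDerivPoly_ne_zero (n : ℕ) : gfunDerivPoly n ≠ 0 := fun h =>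
  (pow_pos two_pos n).ne (by simpa [h] using coeff_gfunDerivPoly_three_mul n)

lemma hasDerivAt_gfun {x : ℝ} (hx : x ≠ 0) : HasDerivAt gfun (2 * x⁻¹ ^ 3 * gfun x) x := by
  have hfun : gfun = fun y => Real.exp (-(y ^ 2)⁻¹) := by ext; simp [gfun]
  rw [hfun]
  refine ((hasDerivAt_pow 2 x).inv (pow_ne_zero 2 hx)).neg.exp.congr_deriv ?_
  simp only [Pi.neg_apply, Pi.inv_apply, inv_pow]
  field_simp
  ring

lemma hasDerivAt_eval_inv_mul_gfun (p : ℝ[X]) {x : ℝ} (hx : x ≠ 0) :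
    HasDerivAt (fun y => p.eval y⁻¹ * gfun y)
      ((2 * X ^ 3 * p - X ^ 2 * derivative p).eval x⁻¹ * gfun x) x := by
  refine (((p.hasDerivAt x⁻¹).comp x (hasDerivAt_inv hx)).mul (hasDerivAt_gfun hx)).congr_deriv ?_
  simp only [eval_sub, eval_mul, eval_pow, eval_X, eval_ofNat, Function.comp_apply]
  field_simp
  ring

lemma iteratedDeriv_gfun (n : ℕ) {x : ℝ} (hx : x ≠ 0) :
    iteratedDeriv n gfun x = (gfunDerivPoly n).eval x⁻¹ * gfun x := by
  induction n generalizing x with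
  | zero => simp [gfunDerivPoly]
  | succ n ih =>
    have hloc : iteratedDeriv n gfun =ᶠ[𝓝 x] fun y => (gfunDerivPoly n).eval y⁻¹ * gfun y :=
      eventually_of_mem (isOpen_ne.mem_nhds hx) fun y hy => ih hy
    rw [iteratedDeriv_succ, hloc.deriv_eq, (hasDerivAt_eval_inv_mul_gfun _ hx).deriv, gfunDerivPoly]

theorem Polynomial.not_isBigO_sum_abs_eval_of_degree_lt {ι : Type*} (s : Finset ι) {P : ℝ[X]}
    {Q : ι → ℝ[X]} (hP : P ≠ 0) (hQ : ∀ i ∈ s, (Q i).degree < P.degree) :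
    ¬ P.eval =O[atTop] fun u => ∑ i ∈ s, |(Q i).eval u| := fun h =>
  h.not_isLittleO (eventually_atTop_not_isRoot P hP).frequently <|
    IsLittleO.fun_sum fun i hi => (isLittleO_atTop_of_degree_lt _ _ (hQ i hi)).abs_left

lemma le_of_forall_Ioc_le_add_mul {a b M : ℝ} (h : ∀ δ ∈ Ioc (0 : ℝ) 1, a ≤ b + δ * M) :
    a ≤ b := by
  have hlim : Tendsto (fun δ : ℝ => b + δ * M) (𝓝[>] 0) (𝓝 b) :=
    ((show Continuous fun δ : ℝ => b + δ * M by fun_prop).tendsto' 0 b (by simp)).mono_left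
      nhdsWithin_le_nhds
  exact ge_of_tendsto hlim (eventually_of_mem (Ioc_mem_nhdsGT one_pos) h)

lemma abs_le_of_eq_sum_mul_add_mul {ι : Type*} {s : Finset ι} {a δ r M : ℝ} {k b : ι → ℝ}
    (hδ : 0 ≤ δ) (hk : ∀ i ∈ s, |k i| ≤ M) (hr : |r| ≤ M)
    (h : a = ∑ i ∈ s, k i * b i + δ * r) : |a| ≤ M * ∑ i ∈ s, |b i| + δ * M :=
  calc |a| ≤ ∑ i ∈ s, |k i * b i| + |δ * r| := by
        rw [h]
        exact (abs_add_le _ _).trans (by gcongr; exact Finset.abs_sum_le_sum_abs _ _)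
    _ ≤ ∑ i ∈ s, M * |b i| + δ * M := by
        rw [abs_mul δ, abs_of_nonneg hδ]
        gcongr with i hi
        · rw [abs_mul]; exact mul_le_mul_of_nonneg_right (hk i hi) (abs_nonneg _)
    _ = M * ∑ i ∈ s, |b i| + δ * M := by rw [Finset.mul_sum]

theorem stmt_17_general (m : ℕ) :
    ¬ ∃ (M : ℝ) (c : Fin m → ℝ → ℝ → ℝ) (c' : ℝ → ℝ → ℝ),
      (∀ (j : Fin m) (δ x : ℝ), δ ∈ Set.Ioc (0:ℝ) 1 → x ∈ Set.Ioo (0:ℝ) 1 →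
        |c j δ x| ≤ M) ∧
      (∀ (δ x : ℝ), δ ∈ Set.Ioc (0:ℝ) 1 → x ∈ Set.Ioo (0:ℝ) 1 → |c' δ x| ≤ M) ∧
      (∀ δ ∈ Set.Ioc (0:ℝ) 1, ∀ x ∈ Set.Ioo (0:ℝ) 1,
        δ * iteratedDeriv m gfun x =
          (∑ j : Fin m, δ * c j δ x * iteratedDeriv (j : ℕ) gfun x) + δ ^ 2 * c' δ x) := by
  rintro ⟨M, c, c', hc, hc', heq⟩
  have hderiv : ∀ x ∈ Ioo (0 : ℝ) 1,
      |iteratedDeriv m gfun x| ≤ M * ∑ j : Fin m, |iteratedDeriv j gfun x| := fun x hx =>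
    le_of_forall_Ioc_le_add_mul fun δ hδ =>
      abs_le_of_eq_sum_mul_add_mul hδ.1.le (fun j _ => hc j δ x hδ hx) (hc' δ x hδ hx) <|
        mul_left_cancel₀ hδ.1.ne' <| by
          rw [heq δ hδ x hx, mul_add, Finset.mul_sum]
          simp only [mul_assoc]
          ring
  refine not_isBigO_sum_abs_eval_of_degree_lt Finset.univ
    (Q := fun j : Fin m => gfunDerivPoly j) (gfunDerivPoly_ne_zero m)
    (fun j _ => degree_lt_degree ?_) (IsBigO.of_bound M ?_)
  · rw [natDegree_gfunDerivPoly, natDegree_gfunDerivPoly]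
    omega
  · filter_upwards [eventually_gt_atTop 1] with u hu
    have hx : u⁻¹ ∈ Ioo (0 : ℝ) 1 := ⟨inv_pos.2 (one_pos.trans hu), inv_lt_one_of_one_lt₀ hu⟩
    have hg : 0 < gfun u⁻¹ := Real.exp_pos _
    have hbound := hderiv u⁻¹ hx
    simp only [iteratedDeriv_gfun _ hx.1.ne', inv_inv, abs_mul, abs_of_pos hg, ← Finset.sum_mul,
      ← mul_assoc] at hbound
    rw [Real.norm_of_nonneg (Finset.sum_nonneg fun _ _ => abs_nonneg _), Real.norm_eq_abs]
    exact le_of_mul_le_mul_right hbound hg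

/-- for `m ≥ 1` there do not exist uniformly bounded functions
`c₀,…,c_{m−1}, c` on `(0,1] × (0,1)` with
`δ g^{(m)}(x) = ∑_{j<m} δ c_j(δ,x) g^{(j)}(x) + δ² c(δ,x)`. -/
theorem stmt_17 (m : ℕ) (hm : 1 ≤ m) :
    ¬ ∃ (M : ℝ) (c : Fin m → ℝ → ℝ → ℝ) (c' : ℝ → ℝ → ℝ),
      (∀ (j : Fin m) (δ x : ℝ), δ ∈ Set.Ioc (0:ℝ) 1 → x ∈ Set.Ioo (0:ℝ) 1 →
        |c j δ x| ≤ M) ∧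
      (∀ (δ x : ℝ), δ ∈ Set.Ioc (0:ℝ) 1 → x ∈ Set.Ioo (0:ℝ) 1 → |c' δ x| ≤ M) ∧
      (∀ δ ∈ Set.Ioc (0:ℝ) 1, ∀ x ∈ Set.Ioo (0:ℝ) 1,
        δ * iteratedDeriv m gfun x =
          (∑ j : Fin m, δ * c j δ x * iteratedDeriv (j : ℕ) gfun x) + δ ^ 2 * c' δ x) :=
  stmt_17_general m
end
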